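/- arXiv:1806.07357 — 5 statements merged into one kernel-verified Lean document; each statement's English description precedes it below -/
import Mathlib

section
/- Let X_1, ..., X_n be i.i.d. random variables with continuous cdf F, let C ⊆ {1,...,n-1} with c = |C|+1, and let x ∈ ℝ. Then P(max_{j∈C} X_j < X_n < x) = F(x)^c / c. -/
/-!
Given `X n = t`, independence makes every `X j`, `j ∈ C`, fall below `t` with probability
`F t ^ |C|`, so the probability in question is `∫_{t < x} F t ^ |C| dν`, `ν` being the law of `X n`.
As `F` is a continuous cdf of `ν`, it pushes `ν` forward to the uniform distribution on `[0, 1)`,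
and `{t | F t < F x}` differs from `{t | t < x}` by a `ν`-null set; hence the integral is
`∫_0^{F x} u ^ |C| du = F x ^ (|C| + 1) / (|C| + 1)`.
-/

open MeasureTheory ProbabilityTheory Set Filter Topology
open scoped ENNReal

section ContinuousCDF

variable {ν : Measure ℝ} {F : ℝ → ℝ}

lemma monotone_of_measure_Iio_eq_ofReal (hF0 : ∀ t, 0 ≤ F t)
    (hcdf : ∀ t, ν (Iio t) = ENNReal.ofReal (F t)) : Monotone F := fun a b hab =>
  (ENNReal.ofReal_le_ofReal_iff (hF0 b)).1 <| hcdf a ▸ hcdf b ▸ measure_mono (Iio_subset_Iio hab)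

lemma nonpos_of_forall_le_of_measure_Iio_eq_ofReal [IsFiniteMeasure ν]
    (hcdf : ∀ t, ν (Iio t) = ENNReal.ofReal (F t)) {u : ℝ} (hu : ∀ t, u ≤ F t) : u ≤ 0 := by
  have hlim : Tendsto (fun t => ν (Iio t)) atBot (𝓝 0) := by
    have h := tendsto_measure_iInter_atBot (μ := ν) (fun t => nullMeasurableSet_Iio)
      monotone_Iio ⟨0, measure_ne_top ν _⟩
    rwa [iInter_eq_empty_iff.2 fun t => ⟨t - 1, by simp⟩, measure_empty] at h
  exact ENNReal.ofReal_eq_zero.1 <| nonpos_iff_eq_zero.1 <|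
    ge_of_tendsto' hlim fun t => hcdf t ▸ ENNReal.ofReal_le_ofReal (hu t)

lemma one_le_of_forall_le_of_measure_Iio_eq_ofReal [IsProbabilityMeasure ν]
    (hcdf : ∀ t, ν (Iio t) = ENNReal.ofReal (F t)) {u : ℝ} (hu : ∀ t, F t ≤ u) : 1 ≤ u := by
  have hlim : Tendsto (fun t => ν (Iio t)) atTop (𝓝 1) := by
    have h := tendsto_measure_iUnion_atTop (μ := ν) (monotone_Iio (α := ℝ))
    rwa [iUnion_Iio, measure_univ] at h
  exact ENNReal.one_le_ofReal.1 <|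
    le_of_tendsto' hlim fun t => hcdf t ▸ ENNReal.ofReal_le_ofReal (hu t)

lemma measure_setOf_lt_eq_ofReal_min [IsProbabilityMeasure ν] (hF : Continuous F)
    (hF0 : ∀ t, 0 ≤ F t) (hcdf : ∀ t, ν (Iio t) = ENNReal.ofReal (F t)) (u : ℝ) :
    ν {t | F t < u} = ENNReal.ofReal (min u 1) := by
  have hmono := monotone_of_measure_Iio_eq_ofReal hF0 hcdf
  by_cases hbelow : ∀ t, F t < u
  · have hu : 1 ≤ u := one_le_of_forall_le_of_measure_Iio_eq_ofReal hcdf fun t => (hbelow t).le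
    rw [show {t | F t < u} = univ from eq_univ_of_forall hbelow, measure_univ, min_eq_right hu,
      ENNReal.ofReal_one]
  by_cases habove : ∀ t, u ≤ F t
  · have hu : u ≤ 0 := nonpos_of_forall_le_of_measure_Iio_eq_ofReal hcdf habove
    rw [show {t | F t < u} = ∅ from eq_empty_of_forall_notMem fun t ht => (habove t).not_gt ht,
      measure_empty, eq_comm, ENNReal.ofReal_eq_zero]
    exact (min_le_left _ _).trans hu
  push Not at hbelow habove
  obtain ⟨s, hs⟩ := hbelow
  obtain ⟨r, hr⟩ := habove
  -- the open lower set `{t | F t < u}` is `Iio b`, `b` being the least point of its complement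
  have hbdd : BddBelow {t | u ≤ F t} :=
    ⟨r, fun t ht => le_of_not_gt fun htr => (hmono htr.le).not_gt (hr.trans_le ht)⟩
  set b := sInf {t | u ≤ F t}
  have hb : u ≤ F b := (isClosed_le continuous_const hF).csInf_mem ⟨s, hs⟩ hbdd
  have hS : ∀ t, F t < u ↔ t < b := fun t =>
    ⟨fun ht => lt_of_not_ge fun hbt => (hb.trans (hmono hbt)).not_gt ht,
      fun htb => lt_of_not_ge fun ht => (csInf_le hbdd ht).not_gt htb⟩
  have hFb : F b = u := le_antisymm
    (le_of_tendsto (hF.continuousAt.tendsto.mono_left nhdsWithin_le_nhds)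
      (eventually_nhdsWithin_of_forall (s := Iio b) fun t ht => ((hS t).2 ht).le)) hb
  have hFb_le_one : F b ≤ 1 := ENNReal.ofReal_le_one.1 (hcdf b ▸ prob_le_one)
  rw [show {t | F t < u} = Iio b from Set.ext hS, hcdf, hFb, min_eq_left (hFb ▸ hFb_le_one)]

lemma map_eq_volume_restrict_Ico [IsProbabilityMeasure ν] (hF : Continuous F)
    (hF0 : ∀ t, 0 ≤ F t) (hcdf : ∀ t, ν (Iio t) = ENNReal.ofReal (F t)) :
    ν.map F = volume.restrict (Ico 0 1) := by
  have : IsProbabilityMeasure (ν.map F) := Measure.isProbabilityMeasure_map hF.aemeasurable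
  refine ext_of_generate_finite _ (BorelSpace.measurable_eq.trans (borel_eq_generateFrom_Iio ℝ))
    isPiSystem_Iio ?_ (by simp)
  rintro _ ⟨u, rfl⟩
  rw [Measure.map_apply hF.measurable measurableSet_Iio, Measure.restrict_apply measurableSet_Iio,
    inter_comm, Ico_inter_Iio, Real.volume_Ico, sub_zero, min_comm]
  exact measure_setOf_lt_eq_ofReal_min hF hF0 hcdf u

lemma setLIntegral_Iio_comp_eq [IsProbabilityMeasure ν] (hF : Continuous F)
    (hF0 : ∀ t, 0 ≤ F t) (hcdf : ∀ t, ν (Iio t) = ENNReal.ofReal (F t)) {g : ℝ → ℝ≥0∞}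
    (hg : Measurable g) (x : ℝ) :
    ∫⁻ t in Iio x, g (F t) ∂ν = ∫⁻ u in Ico 0 (F x), g u := by
  have hmap := map_eq_volume_restrict_Ico hF hF0 hcdf
  have hFx : min 1 (F x) = F x := min_eq_right (ENNReal.ofReal_le_one.1 (hcdf x ▸ prob_le_one))
  -- `F t < F x` forces `t < x`, and both events have probability `F x`
  have hae : F ⁻¹' Iio (F x) =ᵐ[ν] Iio x := by
    refine ae_eq_of_subset_of_measure_ge (fun t ht => lt_of_not_ge fun hxt =>
      (monotone_of_measure_Iio_eq_ofReal hF0 hcdf hxt).not_gt ht) ?_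
      (hF.measurable measurableSet_Iio).nullMeasurableSet (measure_ne_top _ _)
    rw [← Measure.map_apply hF.measurable measurableSet_Iio, hmap, hcdf,
      Measure.restrict_apply measurableSet_Iio, inter_comm, Ico_inter_Iio, hFx, Real.volume_Ico,
      sub_zero]
  rw [← setLIntegral_congr hae, ← setLIntegral_map measurableSet_Iio hg hF.measurable, hmap,
    Measure.restrict_restrict measurableSet_Iio, inter_comm, Ico_inter_Iio, hFx]

end ContinuousCDF

lemma lintegral_Ico_ofReal_pow (k : ℕ) {a : ℝ} (ha : 0 ≤ a) :
    ∫⁻ u in Ico 0 a, ENNReal.ofReal u ^ k = ENNReal.ofReal (a ^ (k + 1) / (k + 1)) := by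
  have hint : IntegrableOn (fun u : ℝ => u ^ k) (Ico 0 a) :=
    (continuous_pow k).integrableOn_Icc.mono_set Ico_subset_Icc_self
  have hnn : 0 ≤ᵐ[volume.restrict (Ico 0 a)] fun u : ℝ => u ^ k :=
    (ae_restrict_iff' measurableSet_Ico).2 (.of_forall fun u hu => pow_nonneg hu.1 k)
  calc ∫⁻ u in Ico 0 a, ENNReal.ofReal u ^ k
      = ∫⁻ u in Ico 0 a, ENNReal.ofReal (u ^ k) :=
        setLIntegral_congr_fun measurableSet_Ico fun u hu => (ENNReal.ofReal_pow hu.1 k).symm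
    _ = ENNReal.ofReal (∫ u in Ico 0 a, u ^ k) :=
        (ofReal_integral_eq_lintegral_ofReal hint hnn).symm
    _ = ENNReal.ofReal (a ^ (k + 1) / (k + 1)) := by
        rw [integral_Ico_eq_integral_Ioo, ← integral_Ioc_eq_integral_Ioo,
          ← intervalIntegral.integral_of_le ha, integral_pow]
        ring_nf

namespace ProbabilityTheory

variable {Ω α β : Type*} {mΩ : MeasurableSpace Ω} {mα : MeasurableSpace α}
  {mβ : MeasurableSpace β} {μ : Measure Ω}

lemma IndepFun.measure_mem_eq_lintegral [IsFiniteMeasure μ] {X : Ω → α} {Y : Ω → β}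
    (hXY : IndepFun X Y μ) (hX : Measurable X) (hY : Measurable Y) {B : Set (α × β)}
    (hB : MeasurableSet B) :
    μ {ω | (X ω, Y ω) ∈ B} = ∫⁻ a, μ {ω | (a, Y ω) ∈ B} ∂(μ.map X) := by
  have h := Measure.map_apply (μ := μ) (hX.prodMk hY) hB
  rw [(indepFun_iff_map_prod_eq_prod_map_map hX.aemeasurable hY.aemeasurable).1 hXY,
    Measure.prod_apply hB] at h
  exact h.symm.trans <| lintegral_congr fun a => Measure.map_apply hY (measurable_prodMk_left hB)

lemma iIndepFun.measure_forall_mem_lt_eq_pow {ι : Type*} {X : ι → Ω → ℝ} (hX : iIndepFun X μ)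
    {t : ℝ} {p : ℝ≥0∞} (hp : ∀ i, μ {ω | X i ω < t} = p) (C : Finset ι) :
    μ {ω | ∀ j ∈ C, X j ω < t} = p ^ C.card := by
  rw [show {ω | ∀ j ∈ C, X j ω < t} = ⋂ j ∈ C, X j ⁻¹' Iio t by ext; simp,
    hX.meas_biInter fun j _ => ⟨Iio t, measurableSet_Iio, rfl⟩]
  exact Finset.prod_eq_pow_card fun j _ => hp j

lemma iIndepFun.indepFun_pi_of_notMem [IsProbabilityMeasure μ] {ι : Type*} {X : ι → Ω → α}
    (hX : iIndepFun X μ) (hmeas : ∀ i, Measurable (X i)) {i : ι} {S : Finset ι} (hi : i ∉ S) :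
    IndepFun (X i) (fun ω (j : S) => X j ω) μ := by
  classical
  exact (hX.indepFun_finset {i} S (Finset.disjoint_singleton_left.2 hi) hmeas).comp
    (measurable_pi_apply (⟨i, Finset.mem_singleton_self i⟩ : ({i} : Finset ι))) measurable_id

end ProbabilityTheory

theorem record_prob_partial_comparison_truncated_general
    {Ω : Type*} [MeasurableSpace Ω] (μ : Measure Ω) [IsProbabilityMeasure μ]
    (n : ℕ)
    (X : ℕ → Ω → ℝ) (hmeas : ∀ i, Measurable (X i))
    (hindep : iIndepFun X μ)
    (F : ℝ → ℝ) (hF : Continuous F) (hF0 : ∀ x, 0 ≤ F x)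
    (hcdf : ∀ i x, μ {ω | X i ω < x} = ENNReal.ofReal (F x))
    (C : Finset ℕ) (hC : C ⊆ Finset.Icc 1 (n - 1)) (x : ℝ) :
    μ {ω | (∀ j ∈ C, X j ω < X n ω) ∧ X n ω < x}
      = ENNReal.ofReal (F x ^ (C.card + 1) / (C.card + 1)) := by
  have hnC : n ∉ C := fun h => by have := Finset.mem_Icc.1 (hC h); omega
  set V : Ω → C → ℝ := fun ω j => X j ω
  set B : Set (ℝ × (C → ℝ)) := {p | (∀ j, p.2 j < p.1) ∧ p.1 < x}
  have hB : MeasurableSet B := by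
    simp only [B, ofPred_and, ofPred_forall]
    exact (MeasurableSet.iInter fun j =>
      measurableSet_lt ((measurable_pi_apply j).comp measurable_snd) measurable_fst).inter
        (measurableSet_lt measurable_fst measurable_const)
  have : IsProbabilityMeasure (μ.map (X n)) :=
    Measure.isProbabilityMeasure_map (hmeas n).aemeasurable
  have hν : ∀ t, μ.map (X n) (Iio t) = ENNReal.ofReal (F t) := fun t =>
    (Measure.map_apply (hmeas n) measurableSet_Iio).trans (hcdf n t)
  have hsection : ∀ t, μ {ω | (t, V ω) ∈ B}
      = (Iio x).indicator (fun t => ENNReal.ofReal (F t) ^ C.card) t := fun t => by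
    by_cases ht : t < x
    · simpa [B, V, ht] using hindep.measure_forall_mem_lt_eq_pow (fun i => hcdf i t) C
    · simp [B, ht]
  calc μ {ω | (∀ j ∈ C, X j ω < X n ω) ∧ X n ω < x}
      = μ {ω | (X n ω, V ω) ∈ B} := by simp [B, V]
    _ = ∫⁻ t in Iio x, ENNReal.ofReal (F t) ^ C.card ∂(μ.map (X n)) := by
        rw [(hindep.indepFun_pi_of_notMem hmeas hnC).measure_mem_eq_lintegral (hmeas n)
          (measurable_pi_lambda _ fun j => hmeas j) hB, ← lintegral_indicator measurableSet_Iio]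
        exact lintegral_congr hsection
    _ = ∫⁻ u in Ico 0 (F x), ENNReal.ofReal u ^ C.card :=
        setLIntegral_Iio_comp_eq hF hF0 hν (ENNReal.measurable_ofReal.pow_const _) x
    _ = ENNReal.ofReal (F x ^ (C.card + 1) / (C.card + 1)) := lintegral_Ico_ofReal_pow _ (hF0 x)

/-- For i.i.d. `X 1, ..., X n` with continuous cdf `F`, a comparison set
`C ⊆ {1,...,n-1}` with `c = |C| + 1` and any `x : ℝ`,
`P(max_{j ∈ C} X j < X n < x) = F(x) ^ c / c`. -/
theorem record_prob_partial_comparison_truncated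
    {Ω : Type*} [MeasurableSpace Ω] (μ : Measure Ω) [IsProbabilityMeasure μ]
    (n : ℕ) (hn : 1 ≤ n)
    (X : ℕ → Ω → ℝ) (hmeas : ∀ i, Measurable (X i))
    (hindep : iIndepFun X μ)
    (F : ℝ → ℝ) (hF : Continuous F) (hF0 : ∀ x, 0 ≤ F x)
    (hcdf : ∀ i x, μ {ω | X i ω < x} = ENNReal.ofReal (F x))
    (C : Finset ℕ) (hC : C ⊆ Finset.Icc 1 (n - 1)) (x : ℝ) :
    μ {ω | (∀ j ∈ C, X j ω < X n ω) ∧ X n ω < x}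
      = ENNReal.ofReal (F x ^ (C.card + 1) / (C.card + 1)) :=
  record_prob_partial_comparison_truncated_general μ n X hmeas hindep F hF hF0 hcdf C hC x
end

section
/- Let X_1, X_2, ... be i.i.d. with continuous cdf F. Let n_1 < n_2 < ... be a strictly increasing sequence of indices with comparison sets C(n_t) ⊆ {1,...,n_t−1} satisfying: (a1) C(n_1) ⊊ C(n_2) ⊊ ... are strictly increasing, and (a2) n_{t−1} ∈ C(n_t) for all t ≥ 2. Define the record events A_{n_t} = {X_{n_t} > max_{j∈C(n_t)} X_j} and c(n_t) = |C(n_t)|+1. Then for any finite set of indices i_1 < i_2 < ... < i_k from {n_t}, P(A_{i_1} ∩ ... ∩ A_{i_k}) = 1/(c(i_1)·c(i_2)···c(i_k)); in particular the record events along the subsequence are mutually independent. -/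
/-!
Ties have probability zero, so almost surely the values `X p`, `p ∈ T`, appear in exactly one of
the `|T|!` relative orders, and by independence and identical distribution each order has
probability `1 / |T|!`. The intersection `E` of the record events of the indices below `a` only
depends on the relative order of the values indexed by `C(a)`; on each such order, `A_a` says that
`X a` is appended last, which cuts the probability by the factor `|C(a)| + 1`. Hence
`P(E ∩ A_a) = P(E) / (|C(a)| + 1)`, and induction on the number of indices gives the product.
-/

open MeasureTheory ProbabilityTheory
open scoped ENNReal
open Set Finset Filter Topology

section ContinuousCdf

variable {ν ν' : Measure ℝ} {F : ℝ → ℝ}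

theorem nullSingletonClass_of_measure_Iio_eq_ofReal [IsFiniteMeasure ν] (hF : Continuous F)
    (hν : ∀ x, ν (Iio x) = ENNReal.ofReal (F x)) : NullSingletonClass ν := by
  refine ⟨fun x => le_antisymm ?_ zero_le⟩
  have hbound : ∀ y ∈ Ioi x, ν {x} ≤ ENNReal.ofReal (F y) - ENNReal.ofReal (F x) := by
    intro y hxy
    rw [← hν, ← hν]
    refine ENNReal.le_sub_of_add_le_right (measure_ne_top _ _) ?_
    rw [← measure_union (by simp) measurableSet_Iio]
    exact measure_mono (Set.insert_subset hxy (Iio_subset_Iio (le_of_lt hxy)))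
  have hlim :
      Tendsto (fun y => ENNReal.ofReal (F y) - ENNReal.ofReal (F x)) (𝓝[>] x) (𝓝 0) := by
    have h : Tendsto (fun y => ENNReal.ofReal (F y) - ENNReal.ofReal (F x)) (𝓝 x)
        (𝓝 (ENNReal.ofReal (F x) - ENNReal.ofReal (F x))) :=
      ENNReal.Tendsto.sub ((ENNReal.continuous_ofReal.comp hF).tendsto x) tendsto_const_nhds
        (Or.inr ENNReal.ofReal_ne_top)
    rw [tsub_self] at h
    exact h.mono_left nhdsWithin_le_nhds
  exact ge_of_tendsto hlim (eventually_nhdsWithin_of_forall hbound)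

theorem Measure.ext_of_Iio_of_isProbabilityMeasure [IsProbabilityMeasure ν]
    [IsProbabilityMeasure ν'] (h : ∀ x, ν (Iio x) = ν' (Iio x)) : ν = ν' :=
  ext_of_generate_finite _ (BorelSpace.measurable_eq.trans (borel_eq_generateFrom_Iio ℝ))
    isPiSystem_Iio (by rintro _ ⟨x, rfl⟩; exact h x) (by simp)

end ContinuousCdf

section Orderings

variable {α : Type*} [DecidableEq α]

noncomputable def orderings (T : Finset α) : Finset (List α) :=
  T.toList.permutations.toFinset

theorem mem_orderings {T : Finset α} {l : List α} :
    l ∈ orderings T ↔ l.Nodup ∧ l.toFinset = T := by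
  rw [orderings, List.mem_toFinset, List.mem_permutations]
  refine ⟨fun h => ⟨h.nodup_iff.2 T.nodup_toList, (List.toFinset_eq_of_perm _ _ h).trans
    T.toList_toFinset⟩, fun ⟨hl, hT⟩ => ?_⟩
  exact List.perm_of_nodup_nodup_toFinset_eq hl T.nodup_toList (hT.trans T.toList_toFinset.symm)

theorem card_orderings (T : Finset α) : #(orderings T) = (#T).factorial := by
  rw [orderings, List.toFinset_card_of_nodup (List.nodup_permutations _ T.nodup_toList),
    List.length_permutations, Finset.length_toList]

end Orderings

section OrderEvents

variable {ι Ω : Type*} (X : ι → Ω → ℝ)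

def orderEvent (l : List ι) : Set Ω := {ω | l.Pairwise fun p q => X p ω < X q ω}

/-- The record event `A_a` of the paper, with comparison set `C(a) = S`. -/
def recordEvent (S : Finset ι) (a : ι) : Set Ω := {ω | ∀ p ∈ S, X p ω < X a ω}

variable {X}

theorem orderEvent_eq_preimage (l : List ι) :
    orderEvent X l = (fun ω (p : Fin l.length) => X l[p] ω) ⁻¹' {y | StrictMono y} := by
  ext ω
  exact List.pairwise_iff_getElem.trans ⟨fun h p q hpq => h p q p.2 q.2 hpq,
    fun h p q hp hq hpq => @h ⟨p, hp⟩ ⟨q, hq⟩ hpq⟩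

theorem measurableSet_setOf_strictMono (n : ℕ) :
    MeasurableSet {y : Fin n → ℝ | StrictMono y} := by
  have h : {y : Fin n → ℝ | StrictMono y} =
      ⋂ (p : Fin n) (q : Fin n) (_ : p < q), {y | y p < y q} := by
    ext y
    simp only [mem_ofPred_eq, mem_iInter]
    exact ⟨fun h p q hpq => h hpq, fun h p q hpq => h p q hpq⟩
  rw [h]
  exact .iInter fun p => .iInter fun q => .iInter fun _ =>
    measurableSet_lt (measurable_pi_apply p) (measurable_pi_apply q)

theorem measurable_pi_getElem [MeasurableSpace Ω] (hX : ∀ i, Measurable (X i)) (l : List ι) :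
    Measurable fun ω (p : Fin l.length) => X l[p] ω :=
  measurable_pi_lambda _ fun p => hX l[p]

theorem measurableSet_orderEvent [MeasurableSpace Ω] (hX : ∀ i, Measurable (X i))
    (l : List ι) : MeasurableSet (orderEvent X l) := by
  rw [orderEvent_eq_preimage]
  exact measurable_pi_getElem hX l (measurableSet_setOf_strictMono _)

variable [DecidableEq ι]

theorem orderEvent_append_singleton (l : List ι) (a : ι) :
    orderEvent X (l ++ [a]) = orderEvent X l ∩ recordEvent X l.toFinset a := by
  ext ω
  simp [orderEvent, recordEvent, List.pairwise_append]

theorem lt_iff_idxOf_lt {l : List ι} {ω : Ω} (hω : ω ∈ orderEvent X l) {p q : ι}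
    (hp : p ∈ l) (hq : q ∈ l) : X p ω < X q ω ↔ l.idxOf p < l.idxOf q := by
  have hlt : ∀ {p q}, p ∈ l → q ∈ l → l.idxOf p < l.idxOf q → X p ω < X q ω := by
    intro p q hp hq hpq
    simpa only [List.getElem_idxOf] using List.pairwise_iff_getElem.1 hω _ _
      (List.idxOf_lt_length_iff.2 hp) (List.idxOf_lt_length_iff.2 hq) hpq
  refine ⟨fun h => ?_, hlt hp hq⟩
  rcases lt_trichotomy (l.idxOf p) (l.idxOf q) with hpq | hpq | hpq
  · exact hpq
  · rw [(List.idxOf_inj hp).1 hpq] at h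
    exact absurd h (lt_irrefl _)
  · exact absurd h (hlt hq hp hpq).asymm

theorem orderEvent_subset_or_disjoint_iInter_recordEvent {κ : Type*} {S : κ → Finset ι}
    {a : κ → ι} {l : List ι} (hl : ∀ j, insert (a j) (S j) ⊆ l.toFinset) :
    orderEvent X l ⊆ ⋂ j, recordEvent X (S j) (a j) ∨
      Disjoint (orderEvent X l) (⋂ j, recordEvent X (S j) (a j)) := by
  have hiff : ∀ ω ∈ orderEvent X l, ω ∈ ⋂ j, recordEvent X (S j) (a j) ↔
      ∀ j, ∀ p ∈ S j, l.idxOf p < l.idxOf (a j) := fun ω hω => by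
    simp only [mem_iInter]
    refine forall_congr' fun j => forall₂_congr fun p hp => lt_iff_idxOf_lt hω ?_ ?_
    · exact List.mem_toFinset.1 (hl j (mem_insert_of_mem hp))
    · exact List.mem_toFinset.1 (hl j (mem_insert_self _ _))
  by_cases hidx : ∀ j, ∀ p ∈ S j, l.idxOf p < l.idxOf (a j)
  · exact .inl fun ω hω => (hiff ω hω).2 hidx
  · exact .inr (Set.disjoint_left.2 fun ω hω hrec => hidx ((hiff ω hω).1 hrec))

theorem disjoint_orderEvent {T : Finset ι} {l l' : List ι} (hl : l ∈ orderings T)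
    (hl' : l' ∈ orderings T) (hne : l ≠ l') : Disjoint (orderEvent X l) (orderEvent X l') := by
  refine Set.disjoint_left.2 fun ω hω hω' => hne ?_
  have : Std.Antisymm fun p q => X p ω < X q ω := ⟨fun _ _ h h' => absurd h' h.asymm⟩
  obtain ⟨hnd, hT⟩ := mem_orderings.1 hl
  obtain ⟨hnd', hT'⟩ := mem_orderings.1 hl'
  exact (List.perm_of_nodup_nodup_toFinset_eq hnd hnd' (hT.trans hT'.symm)).eq_of_pairwise' hω hω'

theorem exists_mem_orderEvent {T : Finset ι} {ω : Ω} (hω : Set.InjOn (X · ω) T) :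
    ∃ l ∈ orderings T, ω ∈ orderEvent X l := by
  let r : ι → ι → Prop := fun p q => X p ω ≤ X q ω
  have : Std.Total r := ⟨fun p q => le_total _ _⟩
  have : IsTrans ι r := ⟨fun _ _ _ => le_trans⟩
  have : DecidableRel r := fun _ _ => Classical.dec _
  have hperm : (T.toList.insertionSort r).Perm T.toList := List.perm_insertionSort r _
  have hnd : (T.toList.insertionSort r).Nodup := hperm.nodup_iff.2 T.nodup_toList
  have hT : (T.toList.insertionSort r).toFinset = T :=
    (List.toFinset_eq_of_perm _ _ hperm).trans T.toList_toFinset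
  refine ⟨_, mem_orderings.2 ⟨hnd, hT⟩, ?_⟩
  refine (hnd.and (List.pairwise_insertionSort r _)).imp_of_mem fun hp hq h => ?_
  refine h.2.lt_of_ne fun heq => h.1 (hω ?_ ?_ heq) <;> simpa using hperm.subset ‹_›

end OrderEvents

section IidRecords

variable {ι Ω : Type*} [MeasurableSpace Ω] {μ : Measure Ω} [IsProbabilityMeasure μ]
  {X : ι → Ω → ℝ} {ν : Measure ℝ}
  (hX : ∀ i, Measurable (X i)) (hindep : iIndepFun X μ) (hlaw : ∀ i, μ.map (X i) = ν)
include hX hindep hlaw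

theorem measure_orderEvent_eq_pi {l : List ι} (hl : l.Nodup) :
    μ (orderEvent X l) = Measure.pi (fun _ : Fin l.length => ν) {y | StrictMono y} := by
  have hjoint : μ.map (fun ω (p : Fin l.length) => X l[p] ω) = Measure.pi fun _ => ν := by
    rw [(iIndepFun_iff_map_fun_eq_pi_map fun p => (hX l[p]).aemeasurable).1
      (hindep.precomp (List.nodup_iff_injective_get.1 hl))]
    simp only [hlaw]
  rw [orderEvent_eq_preimage, ← Measure.map_apply (measurable_pi_getElem hX l)
    (measurableSet_setOf_strictMono _), hjoint]

variable [NullSingletonClass ν]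

theorem ae_ne_of_ne {p q : ι} (hpq : p ≠ q) : ∀ᵐ ω ∂μ, X p ω ≠ X q ω := by
  have : IsProbabilityMeasure ν := hlaw p ▸ Measure.isProbabilityMeasure_map (hX p).aemeasurable
  have hpair : μ.map (fun ω => (X p ω, X q ω)) = ν.prod ν := by
    rw [(indepFun_iff_map_prod_eq_prod_map_map (hX p).aemeasurable (hX q).aemeasurable).1
      (hindep.indepFun hpq), hlaw, hlaw]
  have hdiag : MeasurableSet {z : ℝ × ℝ | z.1 = z.2} :=
    measurableSet_eq_fun measurable_fst measurable_snd
  have hfiber : ∀ x : ℝ, Prod.mk x ⁻¹' {z : ℝ × ℝ | z.1 = z.2} = {x} := fun x => by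
    ext y; simp [eq_comm]
  refine (measure_eq_zero_iff_ae_notMem (s := {ω | X p ω = X q ω})).1 ?_
  calc μ {ω | X p ω = X q ω} = μ.map (fun ω => (X p ω, X q ω)) {z | z.1 = z.2} :=
        (Measure.map_apply ((hX p).prodMk (hX q)) hdiag).symm
    _ = 0 := by simp [hpair, Measure.prod_apply hdiag, hfiber]

variable [DecidableEq ι]

theorem ae_mem_iUnion_orderEvent (T : Finset ι) :
    ∀ᵐ ω ∂μ, ω ∈ ⋃ l ∈ orderings T, orderEvent X l := by
  have hinj : ∀ᵐ ω ∂μ, ∀ p ∈ T, ∀ q ∈ T, X p ω = X q ω → p = q := by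
    simp only [eventually_all_finset]
    intro p _ q _
    rcases eq_or_ne p q with rfl | hpq
    · exact ae_of_all _ fun _ _ => rfl
    · filter_upwards [ae_ne_of_ne hX hindep hlaw hpq] with ω hω heq using absurd heq hω
  filter_upwards [hinj] with ω hω
  obtain ⟨l, hl, hωl⟩ := exists_mem_orderEvent (X := X) (T := T) fun p hp q hq => hω p hp q hq
  exact mem_biUnion hl hωl

theorem measure_eq_sum_inter_orderEvent (T : Finset ι) (E : Set Ω) :
    μ E = ∑ l ∈ orderings T, μ (E ∩ orderEvent X l) := by
  have hdisj : (orderings T : Set (List ι)).PairwiseDisjoint (orderEvent X) :=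
    fun l hl l' hl' hne => disjoint_orderEvent hl hl' hne
  conv_lhs =>
    rw [← Measure.restrict_eq_self_of_ae_mem (ae_mem_iUnion_orderEvent hX hindep hlaw T),
      Measure.restrict_biUnion_finset hdisj (measurableSet_orderEvent hX),
      Measure.sum_apply_of_countable]
  simp only [Measure.restrict_apply' (measurableSet_orderEvent hX _)]
  exact Finset.tsum_subtype (orderings T) fun l => μ (E ∩ orderEvent X l)

theorem measure_orderEvent {l : List ι} (hl : l.Nodup) :
    μ (orderEvent X l) = ((l.length).factorial : ℝ≥0∞)⁻¹ := by
  have hsame : ∀ l' ∈ orderings l.toFinset, μ (orderEvent X l') = μ (orderEvent X l) := by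
    intro l' hl'
    obtain ⟨hnd', hT'⟩ := mem_orderings.1 hl'
    have hlen : l'.length = l.length := by
      rw [← List.toFinset_card_of_nodup hnd', hT', List.toFinset_card_of_nodup hl]
    rw [measure_orderEvent_eq_pi hX hindep hlaw hnd', measure_orderEvent_eq_pi hX hindep hlaw hl,
      hlen]
  refine ENNReal.eq_inv_of_mul_eq_one_left ?_
  rw [← measure_univ (μ := μ), measure_eq_sum_inter_orderEvent hX hindep hlaw l.toFinset univ]
  simp only [univ_inter]
  rw [sum_congr rfl hsame, sum_const, card_orderings, List.toFinset_card_of_nodup hl,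
    nsmul_eq_mul, mul_comm]

theorem measure_inter_orderEvent_append_singleton {l : List ι} {a : ι} (hl : l.Nodup)
    (ha : a ∉ l) {E : Set Ω} (hE : orderEvent X l ⊆ E ∨ Disjoint (orderEvent X l) E) :
    μ (E ∩ orderEvent X (l ++ [a])) =
      μ (E ∩ orderEvent X l) * ((l.length : ℝ≥0∞) + 1)⁻¹ := by
  have hsub : orderEvent X (l ++ [a]) ⊆ orderEvent X l := by
    rw [orderEvent_append_singleton]
    exact inter_subset_left
  rcases hE with hE | hE
  · have hla : (l ++ [a]).Nodup := List.nodup_append.2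
      ⟨hl, List.nodup_singleton a, by simpa using fun b hb (h : b = a) => ha (h ▸ hb)⟩
    rw [inter_eq_right.2 (hsub.trans hE), inter_eq_right.2 hE,
      measure_orderEvent hX hindep hlaw hl, measure_orderEvent hX hindep hlaw hla,
      List.length_append, List.length_singleton, Nat.factorial_succ, Nat.cast_mul,
      ENNReal.mul_inv (by simp) (by simp), mul_comm]
    push_cast
    rfl
  · rw [(hE.mono_left hsub).symm.inter_eq, hE.symm.inter_eq, measure_empty, zero_mul]

theorem measure_inter_recordEvent {S : Finset ι} {a : ι} (ha : a ∉ S) {E : Set Ω}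
    (hE : ∀ l ∈ orderings S, orderEvent X l ⊆ E ∨ Disjoint (orderEvent X l) E) :
    μ (E ∩ recordEvent X S a) = μ E * ((#S : ℝ≥0∞) + 1)⁻¹ := by
  rw [measure_eq_sum_inter_orderEvent hX hindep hlaw S,
    measure_eq_sum_inter_orderEvent hX hindep hlaw S E, sum_mul]
  refine sum_congr rfl fun l hl => ?_
  obtain ⟨hnd, rfl⟩ := mem_orderings.1 hl
  rw [inter_assoc, inter_comm (recordEvent X _ a), ← orderEvent_append_singleton,
    measure_inter_orderEvent_append_singleton hX hindep hlaw hnd (by simpa using ha) (hE l hl),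
    List.toFinset_card_of_nodup hnd]

theorem measure_iInter_recordEvent {k : ℕ} {S : Fin k → Finset ι} {a : Fin k → ι}
    (ha : ∀ j, a j ∉ S j)
    (hnest : ∀ j₁ j₂, j₁ < j₂ → insert (a j₁) (S j₁) ⊆ S j₂) :
    μ (⋂ j, recordEvent X (S j) (a j)) = ∏ j, ((#(S j) : ℝ≥0∞) + 1)⁻¹ := by
  induction k with
  | zero => simp
  | succ k ih =>
    have hsplit : ⋂ j, recordEvent X (S j) (a j) =
        (⋂ j : Fin k, recordEvent X (S j.castSucc) (a j.castSucc)) ∩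
          recordEvent X (S (Fin.last k)) (a (Fin.last k)) := by
      ext ω
      simp only [mem_iInter, mem_inter_iff, Fin.forall_fin_succ']
    rw [hsplit, measure_inter_recordEvent hX hindep hlaw (ha _), Fin.prod_univ_castSucc,
      ih (fun j => ha _) fun j₁ j₂ h => hnest _ _ (Fin.castSucc_lt_castSucc_iff.2 h)]
    intro l hl
    refine orderEvent_subset_or_disjoint_iInter_recordEvent fun j => ?_
    rw [(mem_orderings.1 hl).2]
    exact hnest _ _ (Fin.castSucc_lt_last j)

end IidRecords

theorem insert_subset_of_lt {α : Type*} [DecidableEq α] {D : ℕ → Finset α} {n : ℕ → α}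
    (hD : ∀ t, D t ⊆ D (t + 1)) (hn : ∀ t, n t ∈ D (t + 1)) {t u : ℕ} (htu : t < u) :
    insert (n t) (D t) ⊆ D u := by
  induction u, htu using Nat.le_induction with
  | base => exact insert_subset (hn t) (hD t)
  | succ u _ ih => exact ih.trans (hD u)

theorem record_events_mutually_independent_general
    {Ω : Type*} [MeasurableSpace Ω] (μ : Measure Ω) [IsProbabilityMeasure μ]
    (X : ℕ → Ω → ℝ) (hmeas : ∀ i, Measurable (X i))
    (hindep : iIndepFun X μ)
    (F : ℝ → ℝ) (hF : Continuous F)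
    (hcdf : ∀ i x, μ {ω | X i ω < x} = ENNReal.ofReal (F x))
    (nseq : ℕ → ℕ) (hmono : StrictMono nseq)
    (C : ℕ → Finset ℕ)
    (hsub : ∀ t, C (nseq t) ⊆ Finset.Icc 1 (nseq t - 1))
    (ha1 : ∀ t, C (nseq t) ⊂ C (nseq (t + 1)))
    (ha2 : ∀ t, nseq t ∈ C (nseq (t + 1)))
    (k : ℕ) (i : Fin k → ℕ) (hi : StrictMono i)
    (hrange : ∀ j, ∃ t, i j = nseq t) :
    μ (⋂ j, {ω | ∀ l ∈ C (i j), X l ω < X (i j) ω})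
      = ∏ j, (((C (i j)).card : ℝ≥0∞) + 1)⁻¹ := by
  have hIio : ∀ j x, μ.map (X j) (Iio x) = ENNReal.ofReal (F x) := fun j x => by
    rw [Measure.map_apply (hmeas j) measurableSet_Iio]
    exact hcdf j x
  have : ∀ j, IsProbabilityMeasure (μ.map (X j)) := fun j =>
    Measure.isProbabilityMeasure_map (hmeas j).aemeasurable
  have hlaw : ∀ j, μ.map (X j) = μ.map (X 0) := fun j =>
    Measure.ext_of_Iio_of_isProbabilityMeasure fun x => by rw [hIio, hIio]
  have : NullSingletonClass (μ.map (X 0)) :=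
    nullSingletonClass_of_measure_Iio_eq_ofReal hF (hIio 0)
  have hnotMem : ∀ j, i j ∉ C (i j) := fun j hj => by
    obtain ⟨t, ht⟩ := hrange j
    rw [ht] at hj
    have := Finset.mem_Icc.1 (hsub t hj)
    omega
  have hnest : ∀ j₁ j₂, j₁ < j₂ → insert (i j₁) (C (i j₁)) ⊆ C (i j₂) := by
    intro j₁ j₂ h
    obtain ⟨t₁, ht₁⟩ := hrange j₁
    obtain ⟨t₂, ht₂⟩ := hrange j₂
    rw [ht₁, ht₂]
    refine insert_subset_of_lt (D := fun t => C (nseq t)) (fun t => (ha1 t).subset) ha2 ?_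
    exact hmono.lt_iff_lt.1 (ht₁ ▸ ht₂ ▸ hi h)
  exact measure_iInter_recordEvent hmeas hindep hlaw hnotMem hnest

/-- Mutual independence of record events along a compatible subsequence:
if `X 1, X 2, ...` are i.i.d. with continuous cdf `F`, `nseq` is a strictly
increasing sequence of indices with comparison sets `C (nseq t) ⊆ {1,...,nseq t - 1}`
that are strictly increasing (a1) and satisfy `nseq t ∈ C (nseq (t+1))` (a2), then
for any finitely many indices `i 0 < i 1 < ... < i (k-1)` from the subsequence,
`P(A (i 0) ∩ ... ∩ A (i (k-1))) = ∏ j, 1 / c (i j)` where `c i = |C i| + 1`. -/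
theorem record_events_mutually_independent
    {Ω : Type*} [MeasurableSpace Ω] (μ : Measure Ω) [IsProbabilityMeasure μ]
    (X : ℕ → Ω → ℝ) (hmeas : ∀ i, Measurable (X i))
    (hindep : iIndepFun X μ)
    (F : ℝ → ℝ) (hF : Continuous F)
    (hcdf : ∀ i x, μ {ω | X i ω < x} = ENNReal.ofReal (F x))
    (nseq : ℕ → ℕ) (hmono : StrictMono nseq) (hone : ∀ t, 1 ≤ nseq t)
    (C : ℕ → Finset ℕ)
    (hsub : ∀ t, C (nseq t) ⊆ Finset.Icc 1 (nseq t - 1))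
    (ha1 : ∀ t, C (nseq t) ⊂ C (nseq (t + 1)))
    (ha2 : ∀ t, nseq t ∈ C (nseq (t + 1)))
    (k : ℕ) (i : Fin k → ℕ) (hi : StrictMono i)
    (hrange : ∀ j, ∃ t, i j = nseq t) :
    μ (⋂ j, {ω | ∀ l ∈ C (i j), X l ω < X (i j) ω})
      = ∏ j, (((C (i j)).card : ℝ≥0∞) + 1)⁻¹ :=
  record_events_mutually_independent_general μ X hmeas hindep F hF hcdf nseq hmono C hsub ha1 ha2 k
    i hi hrange
end

section
/- Let X_1, X_2, ... be i.i.d. with continuous cdf F, and suppose I_j := Σ_{t=1}^{j} 1/c(n_t) → ∞ as j → ∞ for a compatible subsequence. Then R_j / I_j → 1 almost surely as j → ∞, where R_j = Σ_{t≤j} 1(A_{n_t}). -/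
/-!
Among i.i.d. continuous variables indexed by a finite set `D` there are almost surely no ties, and
swapping two indices of `D` preserves the joint law, so each index of `D` is the strict maximum
with probability `1 / #D`; hence the record event at `n_t` has probability `1 / c(n_t)`. For
`t < s` the set `C(n_t) ∪ {n_t}` lies in `C(n_s)`, so swaps inside it leave the record event at
`n_s` unchanged; counting again gives pairwise independence of the record events. For pairwise
independent events the variance of `R_j` is at most its mean `I_j`, so Chebyshev's inequality and
Borel–Cantelli give `R_j / I_j → 1` along indices where `I_j ≈ k²`, and the monotonicity of `R`
and `I` fills in the indices in between.
-/

open MeasureTheory ProbabilityTheory Filter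
open scoped ENNReal Topology

lemma Monotone.exists_tendsto_le_lt_succ {φ : ℕ → ℕ} (hφ : Monotone φ)
    (htop : Tendsto φ atTop atTop) :
    ∃ κ : ℕ → ℕ, Tendsto κ atTop atTop ∧ ∀ᶠ j in atTop, φ (κ j) ≤ j ∧ j < φ (κ j + 1) := by
  classical
  have hex : ∀ j, ∃ k, j < φ (k + 1) := fun j =>
    ((htop.comp (tendsto_add_atTop_nat 1)).eventually_gt_atTop j).exists
  refine ⟨fun j => Nat.find (hex j),
    Filter.tendsto_atTop_atTop.2 fun K => ⟨φ K, fun j hj => ?_⟩, ?_⟩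
  · exact (Nat.le_find_iff _ _).2 fun k hk => not_lt.2 ((hφ (by omega)).trans hj)
  · filter_upwards [eventually_ge_atTop (φ 0)] with j hj
    refine ⟨?_, Nat.find_spec (hex j)⟩
    rcases h : Nat.find (hex j) with _ | k
    · exact hj
    · exact not_lt.1 (Nat.find_min (hex j) (show k < Nat.find (hex j) by omega))

lemma tendsto_div_of_monotone_of_subseq {R I : ℕ → ℝ} {l : ℝ} (hR : Monotone R)
    (hR0 : ∀ j, 0 ≤ R j) (hI : Monotone I) {φ : ℕ → ℕ} (hφ : Monotone φ)
    (hφtop : Tendsto φ atTop atTop) (hIpos : ∀ᶠ k in atTop, 0 < I (φ k))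
    (hgap : Tendsto (fun k => I (φ (k + 1)) / I (φ k)) atTop (𝓝 1))
    (hsub : Tendsto (fun k => R (φ k) / I (φ k)) atTop (𝓝 l)) :
    Tendsto (fun j => R j / I j) atTop (𝓝 l) := by
  obtain ⟨κ, hκ, hbracket⟩ := hφ.exists_tendsto_le_lt_succ hφtop
  have hlow : Tendsto (fun k => R (φ k) / I (φ k) / (I (φ (k + 1)) / I (φ k))) atTop (𝓝 l) := by
    have h := hsub.div hgap one_ne_zero
    rwa [div_one] at h
  have hup : Tendsto (fun k => R (φ (k + 1)) / I (φ (k + 1)) * (I (φ (k + 1)) / I (φ k)))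
      atTop (𝓝 l) := by
    simpa using ((tendsto_add_atTop_iff_nat 1).2 hsub).mul hgap
  have hIpos' := hκ.eventually hIpos
  refine tendsto_of_tendsto_of_tendsto_of_le_of_le' (hlow.comp hκ) (hup.comp hκ) ?_ ?_ <;>
    filter_upwards [hbracket, hIpos'] with j ⟨hle, hlt⟩ hpos
  · rw [Function.comp_apply, div_div_div_cancel_right₀ hpos.ne']
    exact div_le_div₀ (hR0 j) (hR hle) (hpos.trans_le (hI hle)) (hI hlt.le)
  · have hpos' : 0 < I (φ (κ j + 1)) := hpos.trans_le (hI (hφ (Nat.le_succ _)))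
    rw [Function.comp_apply, div_mul_div_cancel₀ hpos'.ne']
    exact div_le_div₀ (hR0 _) (hR hlt.le) hpos (hI hle)

lemma exists_monotone_sq_le_le_sq_add_one {I : ℕ → ℝ} (h0 : I 0 = 0)
    (hstep : ∀ j, I (j + 1) ≤ I j + 1) (htop : Tendsto I atTop atTop) :
    ∃ φ : ℕ → ℕ, Monotone φ ∧ Tendsto φ atTop atTop ∧
      ∀ k : ℕ, (k : ℝ) ^ 2 ≤ I (φ k) ∧ I (φ k) ≤ (k : ℝ) ^ 2 + 1 := by
  classical
  have hex : ∀ k : ℕ, ∃ j, (k : ℝ) ^ 2 ≤ I j := fun k => (htop.eventually_ge_atTop _).exists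
  have hle : ∀ j, I j ≤ j := by
    intro j
    induction j with
    | zero => simp [h0]
    | succ j ih => push_cast; linarith [hstep j]
  refine ⟨fun k => Nat.find (hex k), fun a b hab => Nat.find_mono fun j hj => le_trans ?_ hj,
    tendsto_atTop_mono (fun k => ?_) tendsto_id, fun k => ⟨Nat.find_spec (hex k), ?_⟩⟩
  · gcongr
  · have h : ((k ^ 2 : ℕ) : ℝ) ≤ Nat.find (hex k) := by
      push_cast; exact (Nat.find_spec (hex k)).trans (hle _)
    exact (Nat.le_self_pow two_ne_zero k).trans (by exact_mod_cast h)
  · show I (Nat.find (hex k)) ≤ _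
    rcases h : Nat.find (hex k) with _ | j
    · rw [h0]; positivity
    · have := not_le.1 (Nat.find_min (hex k) (show j < Nat.find (hex k) by omega))
      linarith [hstep j]

lemma tendsto_succ_div_of_sq_le_le_sq_add_one {a : ℕ → ℝ}
    (ha : ∀ k : ℕ, (k : ℝ) ^ 2 ≤ a k ∧ a k ≤ (k : ℝ) ^ 2 + 1) :
    Tendsto (fun k => a (k + 1) / a k) atTop (𝓝 1) := by
  have hsq : Tendsto (fun k : ℕ => a k / (k : ℝ) ^ 2) atTop (𝓝 1) := by
    have hinv : Tendsto (fun k : ℕ => 1 + ((k : ℝ) ^ 2)⁻¹) atTop (𝓝 1) := by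
      simpa using (tendsto_const_nhds (x := (1 : ℝ))).add
        (tendsto_inv_atTop_zero.comp ((tendsto_pow_atTop two_ne_zero).comp
          tendsto_natCast_atTop_atTop))
    refine tendsto_of_tendsto_of_tendsto_of_le_of_le' tendsto_const_nhds hinv ?_ ?_ <;>
      filter_upwards [eventually_ge_atTop 1] with k hk <;>
      have hk2 : (0 : ℝ) < (k : ℝ) ^ 2 := by positivity
    · exact (one_le_div hk2).2 (ha k).1
    · rw [div_le_iff₀ hk2, add_mul, one_mul, inv_mul_cancel₀ hk2.ne']
      exact (ha k).2
  have hk : Tendsto (fun k : ℕ => ((k : ℝ) / (k + 1)) ^ 2) atTop (𝓝 1) := by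
    simpa using (tendsto_natCast_div_add_atTop (1 : ℝ)).pow 2
  have := ((hsq.comp (tendsto_add_atTop_nat 1)).div hsq one_ne_zero).div hk one_ne_zero
  rw [div_one, div_one] at this
  refine this.congr' ?_
  filter_upwards [eventually_ge_atTop 1] with k hk
  have hk0 : (0 : ℝ) < k := by exact_mod_cast hk
  have hak : 0 < a k := (by positivity : (0 : ℝ) < (k : ℝ) ^ 2).trans_le (ha k).1
  simp only [Pi.div_apply, Function.comp_apply]
  push_cast
  field_simp

lemma ProbabilityTheory.IndepSet.indepFun_indicator_one {Ω : Type*} [MeasurableSpace Ω]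
    {μ : Measure Ω} {s t : Set Ω} (h : IndepSet s t μ) :
    (s.indicator fun _ => (1 : ℝ)) ⟂ᵢ[μ] (t.indicator fun _ => (1 : ℝ)) := by
  refine Indep.indicator_indepFun (m := MeasurableSpace.generateFrom {s}) 1
    (MeasurableSpace.measurableSet_generateFrom rfl) (indep_of_indep_of_le_right h ?_)
  have : Measurable[MeasurableSpace.generateFrom {t}] (t.indicator fun _ => (1 : ℝ)) :=
    measurable_const.indicator (MeasurableSpace.measurableSet_generateFrom rfl)
  exact this.comap_le

section PairwiseIndependentEvents

variable {Ω ι : Type*} [MeasurableSpace Ω] {μ : Measure Ω} [IsProbabilityMeasure μ]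

lemma variance_sum_indicator_le {A : ι → Set Ω} (hA : ∀ t, MeasurableSet (A t))
    (hind : Pairwise fun t u => IndepSet (A t) (A u) μ) (s : Finset ι) :
    Var[∑ t ∈ s, (A t).indicator fun _ => (1 : ℝ); μ] ≤ ∑ t ∈ s, μ.real (A t) := by
  rw [IndepFun.variance_sum
    (fun t _ => memLp_indicator_const 2 (hA t) 1 (Or.inr (measure_ne_top μ _)))
    (fun t _ u _ htu => (hind htu).indepFun_indicator_one)]
  gcongr with t
  calc Var[(A t).indicator fun _ => (1 : ℝ); μ]
      ≤ μ[((A t).indicator fun _ => (1 : ℝ)) ^ 2] :=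
        variance_le_expectation_sq ((measurable_const.indicator (hA t)).aestronglyMeasurable)
    _ = μ.real (A t) := by
        rw [← integral_indicator_one (hA t)]
        congr 1; ext ω; by_cases h : ω ∈ A t <;> simp [h]

lemma integral_sum_indicator {A : ι → Set Ω} (hA : ∀ t, MeasurableSet (A t)) (s : Finset ι) :
    μ[∑ t ∈ s, (A t).indicator fun _ => (1 : ℝ)] = ∑ t ∈ s, μ.real (A t) := by
  simp only [Finset.sum_apply]
  rw [integral_finsetSum _ fun t _ => (integrable_const 1).indicator (hA t)]
  exact Finset.sum_congr rfl fun t _ => integral_indicator_one (hA t)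

end PairwiseIndependentEvents

lemma ae_tendsto_div_of_variance_le {Ω : Type*} [MeasurableSpace Ω] {μ : Measure Ω}
    [IsProbabilityMeasure μ] {Y : ℕ → Ω → ℝ} {m : ℕ → ℝ} (hY : ∀ k, MemLp (Y k) 2 μ)
    (hmean : ∀ k, μ[Y k] = m k) (hvar : ∀ k, Var[Y k; μ] ≤ m k) (hpos : ∀ k, 0 < m k)
    (hsum : Summable fun k => (m k)⁻¹) :
    ∀ᵐ ω ∂μ, Tendsto (fun k => Y k ω / m k) atTop (𝓝 1) := by
  have hbc : ∀ n : ℕ, ∀ᵐ ω ∂μ, ∀ᶠ k in atTop, |Y k ω - m k| < (n + 1 : ℝ)⁻¹ * m k := by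
    intro n
    have hε : (0 : ℝ) < (n + 1 : ℝ)⁻¹ := by positivity
    have hcheb : ∀ k, μ {ω | (n + 1 : ℝ)⁻¹ * m k ≤ |Y k ω - m k|}
        ≤ ENNReal.ofReal ((n + 1 : ℝ) ^ 2 * (m k)⁻¹) := by
      intro k
      refine (hmean k ▸ meas_ge_le_variance_div_sq (hY k) (mul_pos hε (hpos k))).trans
        (ENNReal.ofReal_le_ofReal ?_)
      have := hpos k
      calc Var[Y k; μ] / ((n + 1 : ℝ)⁻¹ * m k) ^ 2 ≤ m k / ((n + 1 : ℝ)⁻¹ * m k) ^ 2 := by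
            gcongr; exact hvar k
        _ = (n + 1 : ℝ) ^ 2 * (m k)⁻¹ := by field_simp
    have hfin : ∑' k, μ {ω | (n + 1 : ℝ)⁻¹ * m k ≤ |Y k ω - m k|} ≠ ∞ := by
      refine ne_top_of_le_ne_top ?_ (ENNReal.tsum_le_tsum hcheb)
      rw [← ENNReal.ofReal_tsum_of_nonneg (fun k => by have := hpos k; positivity)
        (hsum.mul_left _)]
      exact ENNReal.ofReal_ne_top
    filter_upwards [ae_eventually_notMem hfin] with ω hω
    exact hω.mono fun k hk => not_le.1 hk
  filter_upwards [ae_all_iff.2 hbc] with ω hω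
  refine Metric.tendsto_atTop.2 fun ε hε => ?_
  obtain ⟨n, hn⟩ := exists_nat_one_div_lt hε
  obtain ⟨K, hK⟩ := eventually_atTop.1 (hω n)
  refine ⟨K, fun k hk => ?_⟩
  have hmk := hpos k
  rw [Real.dist_eq, div_sub_one hmk.ne', abs_div, abs_of_pos hmk, div_lt_iff₀ hmk]
  calc |Y k ω - m k| < (n + 1 : ℝ)⁻¹ * m k := hK k hk
    _ ≤ ε * m k := by rw [← one_div]; gcongr

theorem ae_tendsto_sum_indicator_div_sum_measureReal {Ω : Type*} [MeasurableSpace Ω]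
    {μ : Measure Ω} [IsProbabilityMeasure μ] {A : ℕ → Set Ω} (hA : ∀ t, MeasurableSet (A t))
    (hind : Pairwise fun t u => IndepSet (A t) (A u) μ)
    (htop : Tendsto (fun j => ∑ t ∈ Finset.range j, μ.real (A t)) atTop atTop) :
    ∀ᵐ ω ∂μ, Tendsto (fun j => (∑ t ∈ Finset.range j, (A t).indicator (fun _ => (1 : ℝ)) ω) /
      ∑ t ∈ Finset.range j, μ.real (A t)) atTop (𝓝 1) := by
  set I := fun j => ∑ t ∈ Finset.range j, μ.real (A t) with hIdef
  have hImono : Monotone I := fun a b hab =>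
    Finset.sum_le_sum_of_subset_of_nonneg (Finset.range_mono hab) fun _ _ _ => measureReal_nonneg
  obtain ⟨φ, hφ, hφtop, hφI⟩ := exists_monotone_sq_le_le_sq_add_one (I := I) (by simp [hIdef])
    (fun j => by simp only [hIdef, Finset.sum_range_succ]; gcongr; exact measureReal_le_one) htop
  have hpos : ∀ k, 0 < I (φ (k + 1)) := fun k =>
    (by positivity : (0 : ℝ) < ((k + 1 : ℕ) : ℝ) ^ 2).trans_le (hφI (k + 1)).1
  have hsum : Summable fun k => (I (φ (k + 1)))⁻¹ := by
    refine ((summable_nat_add_iff 1).2 (Real.summable_nat_pow_inv.2 one_lt_two)).of_nonneg_of_le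
      (fun k => (hpos k).le |> inv_nonneg.2) fun k => ?_
    exact inv_anti₀ (by positivity) (hφI (k + 1)).1
  have hsub := ae_tendsto_div_of_variance_le
    (Y := fun k => ∑ t ∈ Finset.range (φ (k + 1)), (A t).indicator fun _ => (1 : ℝ))
    (fun k => memLp_finsetSum' _ fun t _ =>
      memLp_indicator_const 2 (hA t) 1 (Or.inr (measure_ne_top μ _)))
    (fun k => integral_sum_indicator hA _) (fun k => variance_sum_indicator_le hA hind _)
    hpos hsum
  filter_upwards [hsub] with ω hω
  simp only [Finset.sum_apply] at hω
  have hnonneg : ∀ t, 0 ≤ (A t).indicator (fun _ => (1 : ℝ)) ω := fun t =>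
    Set.indicator_nonneg (fun _ _ => zero_le_one) ω
  exact tendsto_div_of_monotone_of_subseq
    (fun a b hab => Finset.sum_le_sum_of_subset_of_nonneg (Finset.range_mono hab)
      fun t _ _ => hnonneg t)
    (fun j => Finset.sum_nonneg fun t _ => hnonneg t) hImono hφ hφtop
    ((eventually_ge_atTop 1).mono fun k hk => (pow_pos (Nat.cast_pos.2 hk) 2).trans_le (hφI k).1)
    (tendsto_succ_div_of_sq_le_le_sq_add_one hφI) ((tendsto_add_atTop_iff_nat 1).1 hω)

section StrictMax

variable {ι : Type*}

def recordSet (B : Finset ι) (b : ι) : Set (ι → ℝ) := {x | ∀ l ∈ B, x l < x b}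

def strictMaxSet (D : Finset ι) (d : ι) : Set (ι → ℝ) := {x | ∀ l ∈ D, l ≠ d → x l < x d}

lemma measurableSet_recordSet (B : Finset ι) (b : ι) : MeasurableSet (recordSet B b) := by
  simp only [recordSet, Set.ofPred_forall]
  exact .biInter B.countable_toSet fun l _ =>
    measurableSet_lt (measurable_pi_apply l) (measurable_pi_apply b)

lemma strictMaxSet_eq_recordSet_erase [DecidableEq ι] (D : Finset ι) (d : ι) :
    strictMaxSet D d = recordSet (D.erase d) d := by
  ext x
  simp only [strictMaxSet, recordSet, Finset.mem_erase, Set.mem_ofPred_eq]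
  exact ⟨fun h l hl => h l hl.2 hl.1, fun h l hl hne => h l ⟨hne, hl⟩⟩

lemma measurableSet_strictMaxSet (D : Finset ι) (d : ι) : MeasurableSet (strictMaxSet D d) := by
  classical
  rw [strictMaxSet_eq_recordSet_erase]
  exact measurableSet_recordSet _ d

lemma strictMaxSet_insert [DecidableEq ι] {B : Finset ι} {b : ι} (hb : b ∉ B) :
    strictMaxSet (insert b B) b = recordSet B b := by
  rw [strictMaxSet_eq_recordSet_erase, Finset.erase_insert hb]

lemma preimage_comp_strictMaxSet (e : ι ≃ ι) {D : Finset ι} (hD : ∀ l, e l ∈ D ↔ l ∈ D)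
    (b : ι) : (fun x => x ∘ e) ⁻¹' strictMaxSet D b = strictMaxSet D (e b) := by
  ext x
  simp only [strictMaxSet, Set.mem_preimage, Set.mem_ofPred_eq, Function.comp_apply]
  exact e.forall_congr fun l => by rw [hD, e.injective.ne_iff]

lemma Equiv.swap_apply_mem_iff [DecidableEq ι] {D : Finset ι} {d d' : ι} (hd : d ∈ D)
    (hd' : d' ∈ D) (l : ι) : Equiv.swap d d' l ∈ D ↔ l ∈ D := by
  rcases eq_or_ne l d with rfl | h
  · simp [hd, hd']
  rcases eq_or_ne l d' with rfl | h'
  · simp [hd, hd']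
  · rw [Equiv.swap_apply_of_ne_of_ne h h']

lemma pairwiseDisjoint_strictMaxSet (D : Finset ι) :
    (D : Set ι).PairwiseDisjoint (strictMaxSet D) := fun d hd d' hd' hne =>
  Set.disjoint_left.2 fun _ h h' => (h d' hd' hne.symm).asymm (h' d hd hne)

lemma mem_biUnion_strictMaxSet {D : Finset ι} (hD : D.Nonempty) {x : ι → ℝ}
    (hx : ∀ a ∈ D, ∀ c ∈ D, a ≠ c → x a ≠ x c) : x ∈ ⋃ d ∈ D, strictMaxSet D d := by
  obtain ⟨d, hd, hmax⟩ := D.exists_max_image x hD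
  exact Set.mem_biUnion hd fun l hl hne => (hmax l hl).lt_of_ne (hx l hl d hd hne)

end StrictMax

section Exchangeable

variable {ι : Type*} (ν : Measure ℝ) [IsProbabilityMeasure ν]

lemma measurePreserving_comp_equiv (e : ι ≃ ι) :
    MeasurePreserving (fun x : ι → ℝ => x ∘ e) (Measure.infinitePi fun _ => ν)
      (Measure.infinitePi fun _ => ν) :=
  ⟨by fun_prop, by
    convert Measure.infinitePi_map_piCongrLeft (fun _ : ι => ν) e.symm using 2
    ext x i
    simp [MeasurableEquiv.coe_piCongrLeft, Equiv.piCongrLeft_apply_eq_cast]⟩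

lemma infinitePi_setOf_apply_eq_apply [NullSingletonClass ν] {a c : ι} (h : a ≠ c) :
    Measure.infinitePi (fun _ => ν) {x | x a = x c} = 0 := by
  have hind : (fun x : ι → ℝ => x a) ⟂ᵢ[Measure.infinitePi fun _ => ν] (fun x => x c) :=
    (iIndepFun_infinitePi (X := fun _ => id) fun _ => measurable_id).indepFun h
  rw [indepFun_iff_map_prod_eq_prod_map_map (measurable_pi_apply a).aemeasurable
    (measurable_pi_apply c).aemeasurable, Measure.infinitePi_map_eval,
    Measure.infinitePi_map_eval] at hind
  change Measure.infinitePi (fun _ => ν) ((fun x => (x a, x c)) ⁻¹' Set.diagonal ℝ) = 0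
  rw [← Measure.map_apply (by fun_prop) measurableSet_diagonal, hind,
    Measure.prod_apply measurableSet_diagonal]
  have hsec : ∀ x : ℝ, Prod.mk x ⁻¹' Set.diagonal ℝ = {x} := fun x => by
    ext y; simp [eq_comm]
  simp [hsec]

variable {ν} [NullSingletonClass ν] [DecidableEq ι]

lemma card_mul_measure_inter_strictMaxSet {D : Finset ι} {E : Set (ι → ℝ)}
    (hE : MeasurableSet E)
    (hinv : ∀ d ∈ D, ∀ d' ∈ D, (fun x => x ∘ Equiv.swap d d') ⁻¹' E = E) {d : ι} (hd : d ∈ D) :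
    D.card * Measure.infinitePi (fun _ => ν) (E ∩ strictMaxSet D d)
      = Measure.infinitePi (fun _ => ν) E := by
  set P := Measure.infinitePi fun _ : ι => ν
  have hmeas : ∀ d', MeasurableSet (E ∩ strictMaxSet D d') := fun d' =>
    hE.inter (measurableSet_strictMaxSet D d')
  have hsame : ∀ d' ∈ D, P (E ∩ strictMaxSet D d') = P (E ∩ strictMaxSet D d) := by
    intro d' hd'
    rw [← (measurePreserving_comp_equiv ν (Equiv.swap d d')).measure_preimage
      (hmeas d).nullMeasurableSet, Set.preimage_inter, hinv d hd d' hd',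
      preimage_comp_strictMaxSet _ (Equiv.swap_apply_mem_iff hd hd'), Equiv.swap_apply_left]
  have hnoTies : ∀ᵐ x ∂P, ∀ a ∈ D, ∀ c ∈ D, a ≠ c → x a ≠ x c := by
    refine (Finset.eventually_all _).2 fun a _ => (Finset.eventually_all _).2 fun c _ => ?_
    rcases eq_or_ne a c with rfl | hac
    · exact Eventually.of_forall fun _ h => absurd rfl h
    · exact (measure_eq_zero_iff_ae_notMem.1 (infinitePi_setOf_apply_eq_apply ν hac)).mono
        fun x hx _ => hx
  have hcover : P (⋃ d' ∈ D, E ∩ strictMaxSet D d') = P E := by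
    refine le_antisymm (measure_mono (Set.iUnion₂_subset fun _ _ => Set.inter_subset_left))
      (measure_mono_ae (hnoTies.mono fun x hx hxE => ?_))
    obtain ⟨d', hd', hx⟩ := Set.mem_iUnion₂.1 (mem_biUnion_strictMaxSet ⟨d, hd⟩ hx)
    exact Set.mem_biUnion hd' ⟨hxE, hx⟩
  rw [← hcover, measure_biUnion_finset
    (fun a ha b hb hab => ((pairwiseDisjoint_strictMaxSet D ha hb hab).mono
      Set.inter_subset_right Set.inter_subset_right)) fun d' _ => hmeas d',
    Finset.sum_congr rfl hsame, Finset.sum_const, nsmul_eq_mul]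

lemma infinitePi_strictMaxSet {D : Finset ι} {d : ι} (hd : d ∈ D) :
    Measure.infinitePi (fun _ => ν) (strictMaxSet D d) = (D.card : ℝ≥0∞)⁻¹ := by
  have h := card_mul_measure_inter_strictMaxSet (ν := ν) MeasurableSet.univ
    (fun _ _ _ _ => Set.preimage_univ) hd
  rw [Set.univ_inter, measure_univ, mul_comm] at h
  exact ENNReal.eq_inv_of_mul_eq_one_left h

lemma infinitePi_strictMaxSet_inter {D D' : Finset ι} (hD : D ⊆ D') {b d : ι} (hb : b ∉ D)
    (hd : d ∈ D) :
    Measure.infinitePi (fun _ => ν) (strictMaxSet D' b ∩ strictMaxSet D d)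
      = Measure.infinitePi (fun _ => ν) (strictMaxSet D' b)
        * Measure.infinitePi (fun _ => ν) (strictMaxSet D d) := by
  have h := card_mul_measure_inter_strictMaxSet (ν := ν) (measurableSet_strictMaxSet D' b)
    (fun e he e' he' => by
      rw [preimage_comp_strictMaxSet _ (Equiv.swap_apply_mem_iff (hD he) (hD he')),
        Equiv.swap_apply_of_ne_of_ne (ne_of_mem_of_not_mem he hb).symm
          (ne_of_mem_of_not_mem he' hb).symm]) hd
  rw [infinitePi_strictMaxSet hd, ← h, mul_comm, ← mul_assoc, ENNReal.inv_mul_cancel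
    (by exact_mod_cast (Finset.card_pos.2 ⟨d, hd⟩).ne') (ENNReal.natCast_ne_top _), one_mul]

end Exchangeable

lemma MeasureTheory.Measure.ext_of_Iio {α : Type*} [TopologicalSpace α] [MeasurableSpace α]
    [SecondCountableTopology α] [LinearOrder α] [OrderTopology α] [BorelSpace α]
    (μ ν : Measure α) [IsProbabilityMeasure μ] [IsProbabilityMeasure ν]
    (h : ∀ a, μ (Set.Iio a) = ν (Set.Iio a)) : μ = ν :=
  ext_of_generate_finite _ (BorelSpace.measurable_eq.trans (borel_eq_generateFrom_Iio α))
    isPiSystem_Iio (by rintro _ ⟨a, rfl⟩; exact h a) (by simp)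

lemma nullSingletonClass_of_measure_Iio {ν : Measure ℝ} [IsFiniteMeasure ν] {F : ℝ → ℝ}
    (hF : Continuous F) (h : ∀ x, ν (Set.Iio x) = ENNReal.ofReal (F x)) :
    NullSingletonClass ν := by
  refine ⟨fun a => le_antisymm ?_ zero_le⟩
  have hlim : Tendsto (fun b => ν (Set.Iio b) - ν (Set.Iio a)) (𝓝[>] a) (𝓝 0) := by
    simp_rw [h]
    rw [← tsub_self (ENNReal.ofReal (F a))]
    exact ENNReal.Tendsto.sub ((ENNReal.continuous_ofReal.comp hF).tendsto a |>.mono_left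
      nhdsWithin_le_nhds) tendsto_const_nhds (.inl ENNReal.ofReal_ne_top)
  refine ge_of_tendsto hlim (eventually_nhdsWithin_of_forall fun b (hb : a < b) => ?_)
  rw [← measure_sdiff (Set.Iio_subset_Iio hb.le) measurableSet_Iio.nullMeasurableSet
    (measure_ne_top _ _)]
  exact measure_mono fun x (hx : x = a) => ⟨hx ▸ hb, hx.ge.not_gt⟩

lemma ProbabilityTheory.iIndepFun.map_fun_eq_infinitePi_of_measure_Iio {Ω ι : Type*}
    [MeasurableSpace Ω] {μ : Measure Ω} [IsProbabilityMeasure μ] {X : ι → Ω → ℝ}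
    (hmeas : ∀ i, Measurable (X i)) (hindep : iIndepFun X μ) {G : ℝ → ℝ≥0∞}
    (hG : ∀ i x, μ {ω | X i ω < x} = G x) (i₀ : ι) :
    μ.map (fun ω i => X i ω) = Measure.infinitePi fun _ => μ.map (X i₀) := by
  rw [hindep.map_fun_eq_infinitePi_map hmeas]
  congr with i : 1
  have := Measure.isProbabilityMeasure_map (μ := μ) (hmeas i).aemeasurable
  have := Measure.isProbabilityMeasure_map (μ := μ) (hmeas i₀).aemeasurable
  refine Measure.ext_of_Iio _ _ fun x => ?_
  rw [Measure.map_apply (hmeas i) measurableSet_Iio, Measure.map_apply (hmeas i₀) measurableSet_Iio]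
  exact (hG i x).trans (hG i₀ x).symm

section RecordEvents

variable {Ω ι : Type*} [MeasurableSpace Ω] {μ : Measure Ω}
  [DecidableEq ι] {X : ι → Ω → ℝ} {ν : Measure ℝ} [IsProbabilityMeasure ν] [NullSingletonClass ν]

lemma measureReal_preimage_recordSet (hX : Measurable fun ω i => X i ω)
    (hlaw : μ.map (fun ω i => X i ω) = Measure.infinitePi fun _ => ν) {B : Finset ι} {b : ι}
    (hb : b ∉ B) :
    μ.real ((fun ω i => X i ω) ⁻¹' recordSet B b) = 1 / (B.card + 1) := by
  rw [measureReal_def, ← Measure.map_apply hX (measurableSet_recordSet B b), hlaw,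
    ← strictMaxSet_insert hb, infinitePi_strictMaxSet (Finset.mem_insert_self b B),
    Finset.card_insert_of_notMem hb, ENNReal.toReal_inv, ENNReal.toReal_natCast, Nat.cast_succ,
    one_div]

lemma indepSet_preimage_recordSet [IsProbabilityMeasure μ] (hX : Measurable fun ω i => X i ω)
    (hlaw : μ.map (fun ω i => X i ω) = Measure.infinitePi fun _ => ν) {B B' : Finset ι}
    {b b' : ι} (hb : b ∉ B) (hb' : b' ∉ B') (hB : insert b B ⊆ B') :
    IndepSet ((fun ω i => X i ω) ⁻¹' recordSet B' b') ((fun ω i => X i ω) ⁻¹' recordSet B b) μ := by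
  rw [indepSet_iff_measure_inter_eq_mul (hX (measurableSet_recordSet B' b'))
    (hX (measurableSet_recordSet B b)) μ, ← Set.preimage_inter,
    ← Measure.map_apply hX ((measurableSet_recordSet B' b').inter (measurableSet_recordSet B b)),
    ← Measure.map_apply hX (measurableSet_recordSet B' b'),
    ← Measure.map_apply hX (measurableSet_recordSet B b), hlaw, ← strictMaxSet_insert hb,
    ← strictMaxSet_insert hb']
  exact infinitePi_strictMaxSet_inter (hB.trans (Finset.subset_insert _ _)) (fun h => hb' (hB h))
    (Finset.mem_insert_self b B)

end RecordEvents

lemma Finset.insert_subset_of_lt {B : ℕ → Finset ℕ} {a : ℕ → ℕ}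
    (h : ∀ t, insert (a t) (B t) ⊆ B (t + 1)) {t s : ℕ} (hts : t < s) :
    insert (a t) (B t) ⊆ B s :=
  (h t).trans (monotone_nat_of_le_succ (fun t => (Finset.subset_insert _ _).trans (h t)) hts)

theorem record_count_strong_law_general
    {Ω : Type*} [MeasurableSpace Ω] (μ : Measure Ω) [IsProbabilityMeasure μ]
    (X : ℕ → Ω → ℝ) (hmeas : ∀ i, Measurable (X i))
    (hindep : iIndepFun X μ)
    (F : ℝ → ℝ) (hF : Continuous F)
    (hcdf : ∀ i x, μ {ω | X i ω < x} = ENNReal.ofReal (F x))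
    (nseq : ℕ → ℕ)
    (C : ℕ → Finset ℕ)
    (hsub : ∀ t, C (nseq t) ⊆ Finset.Icc 1 (nseq t - 1))
    (ha1 : ∀ t, C (nseq t) ⊂ C (nseq (t + 1)))
    (ha2 : ∀ t, nseq t ∈ C (nseq (t + 1)))
    (R : ℕ → Ω → ℝ)
    (hR : ∀ j ω, R j ω = ∑ t ∈ Finset.range j,
      Set.indicator {ω' | ∀ l ∈ C (nseq t), X l ω' < X (nseq t) ω'} (fun _ => (1 : ℝ)) ω)
    (I : ℕ → ℝ)
    (hI : ∀ j, I j = ∑ t ∈ Finset.range j, (1 : ℝ) / ((C (nseq t)).card + 1))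
    (hIinf : Tendsto I atTop atTop) :
    ∀ᵐ ω ∂μ, Tendsto (fun j => R j ω / I j) atTop (nhds 1) := by
  have hX : Measurable fun ω i => X i ω := measurable_pi_lambda _ hmeas
  have hlaw := hindep.map_fun_eq_infinitePi_of_measure_Iio hmeas hcdf 0
  have := Measure.isProbabilityMeasure_map (μ := μ) (hmeas 0).aemeasurable
  have : NullSingletonClass (μ.map (X 0)) := nullSingletonClass_of_measure_Iio hF fun x => by
    rw [Measure.map_apply (hmeas 0) measurableSet_Iio]; exact hcdf 0 x
  have hnotin : ∀ t, nseq t ∉ C (nseq t) := fun t h => by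
    have := Finset.mem_Icc.1 (hsub t h); omega
  have hchain : ∀ {t s}, t < s → insert (nseq t) (C (nseq t)) ⊆ C (nseq s) :=
    Finset.insert_subset_of_lt fun t => Finset.insert_subset (ha2 t) (ha1 t).subset
  set A := fun t => (fun ω i => X i ω) ⁻¹' recordSet (C (nseq t)) (nseq t)
  have hIeq : ∀ j, ∑ t ∈ Finset.range j, μ.real (A t) = I j := fun j =>
    (hI j).symm ▸ Finset.sum_congr rfl fun t _ => measureReal_preimage_recordSet hX hlaw (hnotin t)
  have hind : Pairwise fun t u => IndepSet (A t) (A u) μ := fun t u htu => by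
    rcases htu.lt_or_gt with h | h
    · exact Indep.symm (indepSet_preimage_recordSet hX hlaw (hnotin t) (hnotin u) (hchain h))
    · exact indepSet_preimage_recordSet hX hlaw (hnotin u) (hnotin t) (hchain h)
  filter_upwards [ae_tendsto_sum_indicator_div_sum_measureReal (A := A)
    (fun t => hX (measurableSet_recordSet _ _)) hind (by simpa only [hIeq] using hIinf)] with ω hω
  simp only [hIeq] at hω
  simp only [hR]
  exact hω

/-- Strong law for the record counts along a compatible subsequence:
if `I j = ∑_{t<j} 1 / c (nseq t) → ∞`, then `R j / I j → 1` almost surely. -/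
theorem record_count_strong_law
    {Ω : Type*} [MeasurableSpace Ω] (μ : Measure Ω) [IsProbabilityMeasure μ]
    (X : ℕ → Ω → ℝ) (hmeas : ∀ i, Measurable (X i))
    (hindep : iIndepFun X μ)
    (F : ℝ → ℝ) (hF : Continuous F)
    (hcdf : ∀ i x, μ {ω | X i ω < x} = ENNReal.ofReal (F x))
    (nseq : ℕ → ℕ) (hmono : StrictMono nseq) (hone : ∀ t, 1 ≤ nseq t)
    (C : ℕ → Finset ℕ)
    (hsub : ∀ t, C (nseq t) ⊆ Finset.Icc 1 (nseq t - 1))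
    (ha1 : ∀ t, C (nseq t) ⊂ C (nseq (t + 1)))
    (ha2 : ∀ t, nseq t ∈ C (nseq (t + 1)))
    (R : ℕ → Ω → ℝ)
    (hR : ∀ j ω, R j ω = ∑ t ∈ Finset.range j,
      Set.indicator {ω' | ∀ l ∈ C (nseq t), X l ω' < X (nseq t) ω'} (fun _ => (1 : ℝ)) ω)
    (I : ℕ → ℝ)
    (hI : ∀ j, I j = ∑ t ∈ Finset.range j, (1 : ℝ) / ((C (nseq t)).card + 1))
    (hIinf : Tendsto I atTop atTop) :
    ∀ᵐ ω ∂μ, Tendsto (fun j => R j ω / I j) atTop (nhds 1) :=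
  record_count_strong_law_general μ X hmeas hindep F hF hcdf nseq C hsub ha1 ha2 R hR I hI hIinf
end

section
/- Let X_1, X_2, ... be i.i.d. with continuous cdf F and classical records (total comparison). For every r ≥ 1 and x ∈ ℝ, P(X_{L(r)} < x) = E[F(x)^{L(r)}], where L(r) is the index of the r-th record. -/
/-!
On the almost sure event that infinitely many records occur, `L r = n` says exactly that
`X n` is the `r`-th record, an event determined by the relative order of `X 1, …, X n`;
on it `X n = max (X 1, …, X n)`, so `{L r = n, X n < x} = {L r = n} ∩ {X 1, …, X n < x}`.
For i.i.d. atomless coordinates, almost every tuple lies in exactly one of the `n!` chambers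
`{v | v ∘ σ strictly increasing}`, and permuting coordinates preserves the law while
permuting the chambers. Hence every order-determined event is independent of every
permutation-invariant event such as `{X 1, …, X n < x}`, of probability `F x ^ n`, and
summing over `n` gives `P(X (L r) < x) = ∑ P(L r = n) F x ^ n = E[F x ^ L r]`.
-/

open MeasureTheory ProbabilityTheory Set Filter Topology
open scoped ENNReal

section Records

variable {α : Type*} [LinearOrder α]

def IsRecord (x : ℕ → α) (n : ℕ) : Prop := 0 < n ∧ ∀ j ∈ Finset.Ico 1 n, x j < x n

instance (x : ℕ → α) : DecidablePred (IsRecord x) := fun n =>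
  inferInstanceAs (Decidable (0 < n ∧ ∀ j ∈ Finset.Ico 1 n, x j < x n))

theorem eq_nth_isRecord {x : ℕ → α} {ℓ : ℕ → ℕ} (h0 : ℓ 0 = 0)
    (hsucc : ∀ r, ℓ (r + 1) = sInf {n | ℓ r < n ∧ ∀ j, 1 ≤ j → j < n → x j < x n})
    (hinf : {n | IsRecord x n}.Infinite) (r : ℕ) : ℓ (r + 1) = Nat.nth (IsRecord x) r := by
  induction r with
  | zero =>
    rw [hsucc, h0, Nat.nth_zero]
    refine congrArg sInf (Set.ext fun n => ?_)
    simp [IsRecord]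
  | succ r ih =>
    rw [hsucc, ih, Nat.nth_eq_sInf (IsRecord x) (r + 1)]
    refine congrArg sInf (Set.ext fun n => ⟨?_, ?_⟩)
    · rintro ⟨hlt, hrec⟩
      exact ⟨⟨by omega, fun j hj => hrec j (Finset.mem_Ico.1 hj).1 (Finset.mem_Ico.1 hj).2⟩,
        fun k hk => (Nat.nth_monotone hinf (by omega)).trans_lt hlt⟩
    · rintro ⟨⟨-, hrec⟩, hlt⟩
      exact ⟨hlt r r.lt_add_one, fun j h1 h2 => hrec j (Finset.mem_Ico.2 ⟨h1, h2⟩)⟩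

theorem Nat.nth_eq_iff_of_infinite {p : ℕ → Prop} [DecidablePred p] (hp : {n | p n}.Infinite)
    {k n : ℕ} : Nat.nth p k = n ↔ p n ∧ Nat.count p n = k :=
  ⟨fun h => h ▸ ⟨Nat.nth_mem_of_infinite hp k, Nat.count_nth_of_infinite hp k⟩,
    fun ⟨hn, hc⟩ => hc ▸ Nat.nth_count hn⟩

theorem isRecord_iff_of_lt_iff {x y : ℕ → α} {n : ℕ}
    (h : ∀ i ∈ Icc 1 n, ∀ j ∈ Icc 1 n, x i < x j ↔ y i < y j) :
    IsRecord x n ↔ IsRecord y n := by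
  refine and_congr_right fun hn => forall₂_congr fun j hj => ?_
  rw [Finset.mem_Ico] at hj
  exact h j ⟨hj.1, hj.2.le⟩ n ⟨hn, le_rfl⟩

theorem count_isRecord_eq_of_lt_iff {x y : ℕ → α} {n : ℕ}
    (h : ∀ i ∈ Icc 1 n, ∀ j ∈ Icc 1 n, x i < x j ↔ y i < y j) :
    Nat.count (IsRecord x) n = Nat.count (IsRecord y) n := by
  simp only [Nat.count_eq_card_filter_range]
  congr 1
  refine Finset.filter_congr fun k hk => isRecord_iff_of_lt_iff fun i hi j hj => ?_
  have hkn : Icc 1 k ⊆ Icc 1 n := Icc_subset_Icc_right (Finset.mem_range.1 hk).le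
  exact h i (hkn hi) j (hkn hj)

theorem IsRecord.lt_iff {x : ℕ → α} {n : ℕ} (hn : IsRecord x n) {c : α} :
    x n < c ↔ ∀ j ∈ Icc 1 n, x j < c := by
  refine ⟨fun hc j hj => ?_, fun h => h n ⟨hn.1, le_rfl⟩⟩
  rcases hj.2.lt_or_eq with hjn | rfl
  · exact (hn.2 j (Finset.mem_Ico.2 ⟨hj.1, hjn⟩)).trans hc
  · exact hc

theorem isRecord_succ_of_forall_lt {x : ℕ → α} {q : ℕ} (h : ∀ j < q, x (j + 1) < x (q + 1)) :
    IsRecord x (q + 1) := by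
  refine ⟨q.succ_pos, fun j hj => ?_⟩
  obtain ⟨h1, h2⟩ := Finset.mem_Ico.1 hj
  obtain ⟨i, rfl⟩ := Nat.exists_eq_add_of_le' h1
  exact h i (by omega)

/-- The sequences whose `(k + 1)`-st record occurs at time `n`; for a sequence with infinitely
many records this is `Nat.nth (IsRecord x) k = n`. -/
def recordTimeSet (k n : ℕ) : Set (ℕ → α) := {x | IsRecord x n ∧ Nat.count (IsRecord x) n = k}

theorem mem_recordTimeSet_iff_of_lt_iff {x y : ℕ → α} {k n : ℕ}
    (h : ∀ i ∈ Icc 1 n, ∀ j ∈ Icc 1 n, x i < x j ↔ y i < y j) :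
    x ∈ recordTimeSet k n ↔ y ∈ recordTimeSet k n := by
  simp only [recordTimeSet, mem_ofPred_eq, isRecord_iff_of_lt_iff h,
    count_isRecord_eq_of_lt_iff h]

end Records

section OrderDetermined

variable {ι κ α : Type*} [LT α]

def OrderDetermined (B : Set (ι → α)) : Prop :=
  ∀ v w : ι → α, (∀ i j, v i < v j ↔ w i < w j) → v ∈ B → w ∈ B

theorem OrderDetermined.preimage_comp {B : Set (κ → α)} (hB : OrderDetermined B) (g : κ → ι) :
    OrderDetermined ((fun v : ι → α => v ∘ g) ⁻¹' B) :=
  fun v w hvw => hB (v ∘ g) (w ∘ g) fun i j => hvw (g i) (g j)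

end OrderDetermined

theorem orderDetermined_recordTimeSet {α : Type*} [LinearOrder α] (k n : ℕ) :
    OrderDetermined (recordTimeSet k n : Set (ℕ → α)) :=
  fun _ _ h => (mem_recordTimeSet_iff_of_lt_iff fun i _ j _ => h i j).1

/-- An order-determined set is a union of level sets of the order pattern `v ↦ (v i < v j)ᵢⱼ`,
which takes finitely many values. -/
theorem OrderDetermined.measurableSet {ι : Type*} [Finite ι] {B : Set (ι → ℝ)}
    (hB : OrderDetermined B) : MeasurableSet B := by
  let pattern : (ι → ℝ) → ι → ι → Prop := fun v i j => v i < v j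
  have hpattern : Measurable pattern :=
    measurable_pi_lambda _ fun i => measurable_pi_lambda _ fun j => measurableSet_setOfPred.1
      (measurableSet_lt (measurable_pi_apply i) (measurable_pi_apply j))
  have hB' : B = pattern ⁻¹' (pattern '' B) := by
    refine (subset_preimage_image _ _).antisymm ?_
    rintro w ⟨v, hv, hvw⟩
    exact hB v w (fun i j => iff_of_eq (congrFun (congrFun hvw i) j)) hv
  rw [hB']
  exact hpattern (Set.toFinite _).measurableSet

section Chamber

variable {n : ℕ}

def chamber (σ : Equiv.Perm (Fin n)) : Set (Fin n → ℝ) := {v | StrictMono (v ∘ σ)}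

theorem eq_sort_of_mem_chamber {σ : Equiv.Perm (Fin n)} {v : Fin n → ℝ} (hv : v ∈ chamber σ) :
    σ = Tuple.sort v :=
  Tuple.eq_sort_iff.2 ⟨hv.monotone, fun _ _ hij hv' => absurd hv' (hv hij).ne⟩

theorem mem_chamber_sort {v : Fin n → ℝ} (hv : Function.Injective v) :
    v ∈ chamber (Tuple.sort v) :=
  (Tuple.monotone_sort v).strictMono_of_injective (hv.comp (Equiv.injective _))

theorem lt_iff_of_mem_chamber {σ : Equiv.Perm (Fin n)} {v w : Fin n → ℝ} (hv : v ∈ chamber σ)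
    (hw : w ∈ chamber σ) (i j : Fin n) : v i < v j ↔ w i < w j := by
  have key : ∀ u ∈ chamber σ, u i < u j ↔ σ.symm i < σ.symm j := fun u hu => by
    simpa using hu.lt_iff_lt (a := σ.symm i) (b := σ.symm j)
  rw [key v hv, key w hw]

theorem orderDetermined_chamber (σ : Equiv.Perm (Fin n)) : OrderDetermined (chamber σ) :=
  fun _ _ hvw hv a b hab => (hvw (σ a) (σ b)).1 (hv hab)

theorem OrderDetermined.chamber_subset_or_disjoint {B : Set (Fin n → ℝ)}
    (hB : OrderDetermined B) (σ : Equiv.Perm (Fin n)) :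
    chamber σ ⊆ B ∨ Disjoint (chamber σ) B := by
  refine or_iff_not_imp_right.2 fun h w hw => ?_
  obtain ⟨v, hvσ, hvB⟩ := Set.not_disjoint_iff.1 h
  exact hB v w (lt_iff_of_mem_chamber hvσ hw) hvB

theorem comp_perm_preimage_chamber (σ τ : Equiv.Perm (Fin n)) :
    (· ∘ τ) ⁻¹' chamber σ = chamber (τ * σ) := rfl

end Chamber

theorem measurePreserving_comp_perm {ι α : Type*} [Fintype ι] [MeasurableSpace α]
    (ν : Measure α) [SigmaFinite ν] (σ : Equiv.Perm ι) :
    MeasurePreserving (fun v : ι → α => v ∘ σ) (Measure.pi fun _ => ν)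
      (Measure.pi fun _ => ν) := by
  convert measurePreserving_piCongrLeft (fun _ : ι => ν) σ.symm using 1
  ext v i
  simp [MeasurableEquiv.piCongrLeft, Equiv.piCongrLeft]

theorem ProbabilityTheory.IndepFun.measure_eq_eq_zero {Ω α : Type*} [MeasurableSpace Ω]
    [MeasurableSpace α] [MeasurableEq α] [MeasurableSingletonClass α] {μ : Measure Ω}
    [IsFiniteMeasure μ] {U V : Ω → α} (hU : Measurable U) (hV : Measurable V)
    (h : IndepFun U V μ) [NullSingletonClass (μ.map V)] : μ {ω | U ω = V ω} = 0 := by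
  have hdiag : MeasurableSet (diagonal α) := measurableSet_diagonal
  rw [show {ω | U ω = V ω} = (fun ω => (U ω, V ω)) ⁻¹' diagonal α from rfl,
    ← Measure.map_apply (hU.prodMk hV) hdiag,
    h.map_prod_eq_prod_map_map hU.aemeasurable hV.aemeasurable, Measure.measure_prod_null hdiag]
  refine Filter.Eventually.of_forall fun a => ?_
  have : Prod.mk a ⁻¹' diagonal α = {a} := by ext; simp [eq_comm]
  simp [this]

theorem ae_injective_pi {ι α : Type*} [Fintype ι] [MeasurableSpace α] [MeasurableEq α]
    [MeasurableSingletonClass α] (ν : Measure α) [IsProbabilityMeasure ν]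
    [NullSingletonClass ν] : ∀ᵐ v ∂(Measure.pi fun _ : ι => ν), Function.Injective v := by
  have hsub : {v : ι → α | ¬ Function.Injective v} ⊆ ⋃ (i) (j) (_ : i ≠ j), {v | v i = v j} := by
    intro v hv
    simp only [Function.Injective, not_forall] at hv
    obtain ⟨i, j, hij, hne⟩ := hv
    exact mem_iUnion₂.2 ⟨i, j, mem_iUnion.2 ⟨hne, hij⟩⟩
  refine ae_iff.2 (measure_mono_null hsub (measure_iUnion_null fun i =>
    measure_iUnion_null fun j => measure_iUnion_null fun hij => ?_))
  have hcoord : iIndepFun (fun i (v : ι → α) => v i) (Measure.pi fun _ => ν) :=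
    iIndepFun_pi (X := fun _ => id) fun _ => aemeasurable_id
  have : NullSingletonClass ((Measure.pi fun _ : ι => ν).map fun v => v j) := by
    rw [(measurePreserving_eval (fun _ : ι => ν) j).map_eq]
    infer_instance
  exact (hcoord.indepFun hij).measure_eq_eq_zero (measurable_pi_apply i) (measurable_pi_apply j)

theorem measure_strictArgmax_le {ι : Type*} [Fintype ι] [DecidableEq ι] (ν : Measure ℝ)
    [IsProbabilityMeasure ν] (q : ι) :
    Measure.pi (fun _ : ι => ν) {v | ∀ i ≠ q, v i < v q} ≤ (Fintype.card ι : ℝ≥0∞)⁻¹ := by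
  set A : ι → Set (ι → ℝ) := fun q => {v | ∀ i ≠ q, v i < v q}
  have hmeas (q : ι) : MeasurableSet (A q) :=
    OrderDetermined.measurableSet fun v w hvw hv i hi => (hvw i q).1 (hv i hi)
  have hpre (σ : Equiv.Perm ι) (q : ι) : (fun v : ι → ℝ => v ∘ σ) ⁻¹' A q = A (σ q) := by
    ext v
    refine ⟨fun h i hi => ?_, fun h i hi => h (σ i) (σ.injective.ne hi)⟩
    simpa using h (σ.symm i) (by rintro rfl; simp at hi)
  have heq (q' : ι) : Measure.pi (fun _ => ν) (A q') = Measure.pi (fun _ => ν) (A q) := by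
    have := (measurePreserving_comp_perm ν (Equiv.swap q q')).measure_preimage
      (hmeas q).nullMeasurableSet
    rwa [hpre, Equiv.swap_apply_left] at this
  have hdisj : Pairwise (Function.onFun Disjoint A) := fun a b hab =>
    Set.disjoint_left.2 fun v hva hvb => (hva b (Ne.symm hab)).asymm (hvb a hab)
  rw [ENNReal.le_inv_iff_mul_le]
  calc Measure.pi (fun _ => ν) (A q) * Fintype.card ι
      = ∑ q', Measure.pi (fun _ => ν) (A q') := by simp [heq, mul_comm]
    _ = Measure.pi (fun _ => ν) (⋃ q', A q') := by
      rw [measure_iUnion hdisj hmeas, tsum_fintype]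
    _ ≤ 1 := prob_le_one

section ChamberMeasure

variable {n : ℕ}

theorem measure_chamber_inter_eq_chamber_one {ν : Measure ℝ} [SigmaFinite ν]
    {D : Set (Fin n → ℝ)} (hDm : MeasurableSet D)
    (hD : ∀ τ : Equiv.Perm (Fin n), (fun v => v ∘ τ) ⁻¹' D = D) (σ : Equiv.Perm (Fin n)) :
    Measure.pi (fun _ => ν) (chamber σ ∩ D) = Measure.pi (fun _ => ν) (chamber 1 ∩ D) := by
  have := (measurePreserving_comp_perm ν σ⁻¹).measure_preimage
    ((orderDetermined_chamber σ).measurableSet.inter hDm).nullMeasurableSet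
  rwa [preimage_inter, comp_perm_preimage_chamber, hD, inv_mul_cancel, eq_comm] at this

variable (ν : Measure ℝ) [IsProbabilityMeasure ν] [NullSingletonClass ν]

theorem measure_eq_sum_chamber {A : Set (Fin n → ℝ)} (hA : MeasurableSet A) :
    Measure.pi (fun _ => ν) A = ∑ σ, Measure.pi (fun _ => ν) (chamber σ ∩ A) := by
  have hcover : A =ᵐ[Measure.pi fun _ => ν] ⋃ σ, chamber σ ∩ A := by
    filter_upwards [ae_injective_pi ν] with v hv
    exact propext ⟨fun h => mem_iUnion.2 ⟨_, mem_chamber_sort hv, h⟩,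
      fun h => (mem_iUnion.1 h).choose_spec.2⟩
  have hdisj : Pairwise (Function.onFun Disjoint fun σ => chamber σ ∩ A) := fun σ τ hστ =>
    Set.disjoint_left.2 fun v hσ hτ =>
      hστ ((eq_sort_of_mem_chamber hσ.1).trans (eq_sort_of_mem_chamber hτ.1).symm)
  rw [measure_congr hcover, measure_iUnion hdisj
    fun σ => (orderDetermined_chamber σ).measurableSet.inter hA, tsum_fintype]

theorem measure_chamber_inter {D : Set (Fin n → ℝ)} (hDm : MeasurableSet D)
    (hD : ∀ τ : Equiv.Perm (Fin n), (fun v => v ∘ τ) ⁻¹' D = D) (σ : Equiv.Perm (Fin n)) :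
    Measure.pi (fun _ => ν) (chamber σ ∩ D)
      = Measure.pi (fun _ => ν) (chamber σ) * Measure.pi (fun _ => ν) D := by
  set c : Set (Fin n → ℝ) → ℝ≥0∞ := fun E => Measure.pi (fun _ => ν) (chamber 1 ∩ E)
  have hsum {E : Set (Fin n → ℝ)} (hEm : MeasurableSet E)
      (hE : ∀ τ : Equiv.Perm (Fin n), (fun v => v ∘ τ) ⁻¹' E = E) :
      Measure.pi (fun _ => ν) E = Fintype.card (Equiv.Perm (Fin n)) * c E := by
    rw [measure_eq_sum_chamber ν hEm, Finset.sum_congr rfl fun σ _ =>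
      measure_chamber_inter_eq_chamber_one hEm hE σ, Finset.sum_const, nsmul_eq_mul,
      Finset.card_univ]
  have huniv (τ : Equiv.Perm (Fin n)) : (fun v : Fin n → ℝ => v ∘ τ) ⁻¹' univ = univ :=
    preimage_univ
  have hone := hsum MeasurableSet.univ huniv
  rw [measure_univ] at hone
  calc Measure.pi (fun _ => ν) (chamber σ ∩ D)
      = c D * 1 := by rw [mul_one, measure_chamber_inter_eq_chamber_one hDm hD]
    _ = c univ * (Fintype.card (Equiv.Perm (Fin n)) * c D) := by rw [hone]; ring
    _ = _ := by
      rw [← hsum hDm hD, ← inter_univ (chamber σ),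
        measure_chamber_inter_eq_chamber_one MeasurableSet.univ huniv σ]

theorem OrderDetermined.measure_inter {B : Set (Fin n → ℝ)} (hB : OrderDetermined B)
    {D : Set (Fin n → ℝ)} (hDm : MeasurableSet D)
    (hD : ∀ τ : Equiv.Perm (Fin n), (fun v => v ∘ τ) ⁻¹' D = D) :
    Measure.pi (fun _ => ν) (B ∩ D)
      = Measure.pi (fun _ => ν) B * Measure.pi (fun _ => ν) D := by
  rw [measure_eq_sum_chamber ν (hB.measurableSet.inter hDm),
    measure_eq_sum_chamber ν hB.measurableSet, Finset.sum_mul]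
  refine Finset.sum_congr rfl fun σ _ => ?_
  rcases hB.chamber_subset_or_disjoint σ with h | h
  · rw [← inter_assoc, inter_eq_left.2 h, measure_chamber_inter ν hDm hD]
  · rw [← inter_assoc, h.inter_eq, empty_inter, measure_empty, zero_mul]

end ChamberMeasure

section ContinuousCDF

variable {ν : Measure ℝ} {F : ℝ → ℝ}

theorem measure_Iic_of_continuous (hF : Continuous F)
    (h : ∀ x, ν (Iio x) = ENNReal.ofReal (F x)) (a : ℝ) : ν (Iic a) = ENNReal.ofReal (F a) := by
  refine le_antisymm ?_ (h a ▸ measure_mono Iio_subset_Iic_self)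
  have hlim : Tendsto (fun b => ENNReal.ofReal (F b)) (𝓝[>] a) (𝓝 (ENNReal.ofReal (F a))) :=
    (ENNReal.continuous_ofReal.comp hF).continuousWithinAt
  refine ge_of_tendsto hlim (eventually_nhdsWithin_of_forall fun b hb => ?_)
  exact h b ▸ measure_mono (Iic_subset_Iio.2 hb)

theorem nullSingletonClass_of_continuous (hF : Continuous F)
    (h : ∀ x, ν (Iio x) = ENNReal.ofReal (F x)) : NullSingletonClass ν where
  measure_singleton a := by
    have := measure_union (μ := ν) (s₁ := Iio a) (Set.disjoint_singleton_right.2 (lt_irrefl a))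
      (measurableSet_singleton a)
    rw [Iio_union_right, measure_Iic_of_continuous hF h, h] at this
    simpa using this.symm

theorem MeasureTheory.Measure.ext_of_Iio_of_continuous {ν' : Measure ℝ} [IsFiniteMeasure ν]
    (hF : Continuous F) (h : ∀ x, ν (Iio x) = ENNReal.ofReal (F x))
    (h' : ∀ x, ν' (Iio x) = ENNReal.ofReal (F x)) : ν = ν' :=
  Measure.ext_of_Iic ν ν' fun a => by
    rw [measure_Iic_of_continuous hF h, measure_Iic_of_continuous hF h']

end ContinuousCDF

section RecordProcess

variable {Ω : Type*} [MeasurableSpace Ω] {μ : Measure Ω} {X : ℕ → Ω → ℝ}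

def initialTuple (X : ℕ → Ω → ℝ) (n : ℕ) (ω : Ω) : Fin n → ℝ := fun i => X (i + 1) ω

theorem measurable_initialTuple (hmeas : ∀ i, Measurable (X i)) (n : ℕ) :
    Measurable (initialTuple X n) :=
  measurable_pi_lambda _ fun _ => hmeas _

theorem map_initialTuple_eq_pi (hmeas : ∀ i, Measurable (X i)) (hindep : iIndepFun X μ)
    {ν : Measure ℝ} (hlaw : ∀ i, μ.map (X i) = ν) (n : ℕ) :
    μ.map (initialTuple X n) = Measure.pi fun _ => ν := by
  unfold initialTuple
  have := (hindep.precomp (g := fun i : Fin n => (i : ℕ) + 1)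
    fun i j h => Fin.ext (Nat.succ_injective h)).map_fun_eq_pi_map
    fun i => (hmeas _).aemeasurable
  simpa only [hlaw] using this

variable {ν : Measure ℝ} [IsProbabilityMeasure ν] [NullSingletonClass ν]

/-- The a.s. unique maximiser of `X 1, …, X (N + 1)` is a record, so if there is no record
after time `m` it is one of the first `m` indices, each with probability at most `1 / (N + 1)`. -/
theorem measure_forall_not_isRecord_le (hmeas : ∀ i, Measurable (X i))
    (hY : ∀ n, μ.map (initialTuple X n) = Measure.pi fun _ => ν) (m N : ℕ) :
    μ {ω | ∀ n, m < n → ¬ IsRecord (X · ω) n} ≤ m * ((N + 1 : ℕ) : ℝ≥0∞)⁻¹ := by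
  set A : Fin (N + 1) → Set (Fin (N + 1) → ℝ) := fun q => {v | ∀ i ≠ q, v i < v q}
  set S := Finset.univ.filter fun q : Fin (N + 1) => (q : ℕ) < m
  have hsub : {ω | ∀ n, m < n → ¬ IsRecord (X · ω) n}
      ⊆ initialTuple X (N + 1) ⁻¹' ({v | ¬ Function.Injective v} ∪ ⋃ q ∈ S, A q) := by
    intro ω hω
    by_cases hinj : Function.Injective (initialTuple X (N + 1) ω)
    swap; · exact Or.inl hinj
    obtain ⟨q, -, hq⟩ := Finset.exists_max_image Finset.univ (initialTuple X (N + 1) ω)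
      Finset.univ_nonempty
    have hqmax : ∀ i ≠ q, initialTuple X (N + 1) ω i < initialTuple X (N + 1) ω q :=
      fun i hi => (hq i (Finset.mem_univ i)).lt_of_ne (hinj.ne hi)
    refine Or.inr (mem_biUnion (Finset.mem_filter.2 ⟨Finset.mem_univ q, ?_⟩) hqmax)
    by_contra! hmq
    refine hω (q + 1) (by omega) (isRecord_succ_of_forall_lt fun j hj => ?_)
    exact hqmax ⟨j, hj.trans q.isLt⟩ (Fin.ne_of_val_ne hj.ne)
  calc μ {ω | ∀ n, m < n → ¬ IsRecord (X · ω) n}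
      ≤ Measure.pi (fun _ => ν) ({v | ¬ Function.Injective v} ∪ ⋃ q ∈ S, A q) := by
        rw [← hY]
        exact (measure_mono hsub).trans
          (Measure.le_map_apply (measurable_initialTuple hmeas _).aemeasurable _)
    _ ≤ 0 + ∑ q ∈ S, Measure.pi (fun _ => ν) (A q) :=
        (measure_union_le _ _).trans (add_le_add (ae_iff.1 (ae_injective_pi ν)).le
          (measure_biUnion_finset_le _ _))
    _ ≤ S.card * ((N + 1 : ℕ) : ℝ≥0∞)⁻¹ := by
        rw [zero_add, ← nsmul_eq_mul]
        refine Finset.sum_le_card_nsmul _ _ _ fun q _ => ?_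
        simpa using measure_strictArgmax_le ν q
    _ ≤ m * ((N + 1 : ℕ) : ℝ≥0∞)⁻¹ := by
        gcongr
        simp [S, Fin.card_filter_val_lt]

theorem ae_infinite_isRecord (hmeas : ∀ i, Measurable (X i))
    (hY : ∀ n, μ.map (initialTuple X n) = Measure.pi fun _ => ν) :
    ∀ᵐ ω ∂μ, {n | IsRecord (X · ω) n}.Infinite := by
  simp_rw [← Nat.frequently_atTop_iff_infinite, frequently_atTop', ae_all_iff]
  intro m
  refine ae_iff.2 (le_antisymm ?_ zero_le)
  have hlim : Tendsto (fun N : ℕ => (m : ℝ≥0∞) * ((N + 1 : ℕ) : ℝ≥0∞)⁻¹) atTop (𝓝 0) := by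
    simpa using ENNReal.Tendsto.const_mul
      (ENNReal.tendsto_inv_nat_nhds_zero.comp (tendsto_add_atTop_nat 1))
      (Or.inr (ENNReal.natCast_ne_top m))
  refine ge_of_tendsto' hlim fun N =>
    le_of_eq_of_le ?_ (measure_forall_not_isRecord_le hmeas hY m N)
  congr 1
  ext ω
  simp

theorem ae_eq_recordTimeSet (hmeas : ∀ i, Measurable (X i))
    (hY : ∀ n, μ.map (initialTuple X n) = Measure.pi fun _ => ν)
    {L : ℕ → Ω → ℕ} (hL0 : ∀ ω, L 0 ω = 0)
    (hL : ∀ r ω, L (r + 1) ω = sInf {n | L r ω < n ∧ ∀ j, 1 ≤ j → j < n → X j ω < X n ω})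
    (k n : ℕ) : {ω | L (k + 1) ω = n} =ᵐ[μ] {ω | (X · ω) ∈ recordTimeSet k n} := by
  filter_upwards [ae_infinite_isRecord hmeas hY] with ω hω
  change (L (k + 1) ω = n) = ((X · ω) ∈ recordTimeSet k n)
  rw [eq_nth_isRecord (ℓ := fun r => L r ω) (hL0 ω) (fun r => hL r ω) hω k]
  exact propext (Nat.nth_eq_iff_of_infinite hω)

theorem measure_recordTimeSet_inter_lt (hmeas : ∀ i, Measurable (X i))
    (hY : ∀ n, μ.map (initialTuple X n) = Measure.pi fun _ => ν)
    (k n : ℕ) (x : ℝ) :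
    μ ({ω | (X · ω) ∈ recordTimeSet k n} ∩ {ω | X n ω < x})
      = μ {ω | (X · ω) ∈ recordTimeSet k n} * ν (Iio x) ^ n := by
  obtain _ | m := n
  · simp [recordTimeSet, IsRecord]
  set box : Set (Fin (m + 1) → ℝ) := univ.pi fun _ => Iio x
  -- clamping indices into `[1, m + 1]` extends a tuple to a sequence with the same order pattern
  set R : Set (Fin (m + 1) → ℝ) :=
    (fun v => v ∘ fun j => Fin.clamp (j - 1) m) ⁻¹' recordTimeSet k (m + 1)
  have hRdet : OrderDetermined R := (orderDetermined_recordTimeSet k (m + 1)).preimage_comp _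
  have hagree (ω : Ω) (i : ℕ) (hi : i ∈ Icc 1 (m + 1)) :
      initialTuple X (m + 1) ω (Fin.clamp (i - 1) m) = X i ω := by
    obtain ⟨h1, h2⟩ := hi
    simp only [initialTuple, Fin.clamp]
    congr
    omega
  have hR : {ω | (X · ω) ∈ recordTimeSet k (m + 1)} = initialTuple X (m + 1) ⁻¹' R := by
    ext ω
    refine mem_recordTimeSet_iff_of_lt_iff fun i hi j hj => ?_
    simp only [Function.comp_apply, hagree ω i hi, hagree ω j hj]
  have hRbox : {ω | (X · ω) ∈ recordTimeSet k (m + 1)} ∩ {ω | X (m + 1) ω < x}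
      = initialTuple X (m + 1) ⁻¹' (R ∩ box) := by
    rw [preimage_inter, ← hR]
    ext ω
    refine and_congr_right fun hω => ?_
    simp only [mem_ofPred_eq, mem_preimage, box, mem_univ_pi, mem_Iio, initialTuple]
    rw [hω.1.lt_iff]
    refine ⟨fun h i => h (i + 1) ⟨by omega, i.isLt⟩, fun h j ⟨hj1, hj2⟩ => ?_⟩
    obtain ⟨i, rfl⟩ := Nat.exists_eq_add_of_le' hj1
    exact h ⟨i, by omega⟩
  have hbox (τ : Equiv.Perm (Fin (m + 1))) : (fun v => v ∘ τ) ⁻¹' box = box := by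
    ext v
    simpa [box] using τ.forall_congr_right (q := fun i => v i < x)
  have hYm := measurable_initialTuple hmeas (m + 1)
  have hboxm : MeasurableSet box := MeasurableSet.univ_pi fun _ => measurableSet_Iio
  rw [hRbox, hR, ← Measure.map_apply hYm (hRdet.measurableSet.inter hboxm),
    ← Measure.map_apply hYm hRdet.measurableSet, hY, hRdet.measure_inter ν hboxm hbox]
  simp [box, Measure.pi_pi]

end RecordProcess

section Decomposition

variable {Ω : Type*} [MeasurableSpace Ω] {μ : Measure Ω} {τ : Ω → ℕ}

theorem measure_setOf_mem_apply_eq_tsum (hτ : Measurable τ) {A : ℕ → Set Ω}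
    (hA : ∀ n, MeasurableSet (A n)) :
    μ {ω | ω ∈ A (τ ω)} = ∑' n, μ ({ω | τ ω = n} ∩ A n) := by
  have hunion : {ω | ω ∈ A (τ ω)} = ⋃ n, {ω | τ ω = n} ∩ A n := by
    ext ω
    simp
  have hdisj : Pairwise (Function.onFun Disjoint fun n => {ω | τ ω = n} ∩ A n) :=
    fun a b hab => Set.disjoint_left.2 fun ω ha hb => hab (ha.1.symm.trans hb.1)
  rw [hunion, measure_iUnion hdisj fun n => (hτ (measurableSet_singleton n)).inter (hA n)]

theorem lintegral_comp_eq_tsum (hτ : Measurable τ) (g : ℕ → ℝ≥0∞) :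
    ∫⁻ ω, g (τ ω) ∂μ = ∑' n, g n * μ {ω | τ ω = n} := by
  rw [← lintegral_map measurable_from_nat hτ, lintegral_countable']
  refine tsum_congr fun n => ?_
  rw [Measure.map_apply hτ (measurableSet_singleton n)]
  rfl

end Decomposition

/-- Distribution of the `r`-th classical record value: if `L r` is the `r`-th
record time (with `L 0 = 0` and `L (r+1)` the first index after `L r` at which a
record occurs), then for every `r ≥ 1` and `x : ℝ`,
`P(X_{L r} < x) = E[F(x) ^ (L r)]`. -/
theorem rth_record_value_distribution
    {Ω : Type*} [MeasurableSpace Ω] (μ : Measure Ω) [IsProbabilityMeasure μ]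
    (X : ℕ → Ω → ℝ) (hmeas : ∀ i, Measurable (X i))
    (hindep : iIndepFun X μ)
    (F : ℝ → ℝ) (hF : Continuous F) (hF0 : ∀ x, 0 ≤ F x)
    (hcdf : ∀ i x, μ {ω | X i ω < x} = ENNReal.ofReal (F x))
    (L : ℕ → Ω → ℕ) (hLmeas : ∀ r, Measurable (L r))
    (hL0 : ∀ ω, L 0 ω = 0)
    (hL : ∀ r ω, L (r + 1) ω
      = sInf {n | L r ω < n ∧ ∀ j, 1 ≤ j → j < n → X j ω < X n ω})
    (r : ℕ) (hr : 1 ≤ r) (x : ℝ) :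
    μ {ω | X (L r ω) ω < x} = ∫⁻ ω, ENNReal.ofReal (F x ^ (L r ω)) ∂μ := by
  set ν := μ.map (X 0)
  have hlawIio (i : ℕ) (a : ℝ) : μ.map (X i) (Iio a) = ENNReal.ofReal (F a) := by
    rw [Measure.map_apply (hmeas i) measurableSet_Iio]
    exact hcdf i a
  have hlaw (i : ℕ) : μ.map (X i) = ν :=
    Measure.ext_of_Iio_of_continuous hF (hlawIio i) (hlawIio 0)
  have : NullSingletonClass ν := nullSingletonClass_of_continuous hF (hlawIio 0)
  have : IsProbabilityMeasure ν := Measure.isProbabilityMeasure_map (hmeas 0).aemeasurable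
  have hY := map_initialTuple_eq_pi hmeas hindep hlaw
  obtain ⟨k, rfl⟩ := Nat.exists_eq_add_of_le' hr
  have hevent := ae_eq_recordTimeSet hmeas hY hL0 hL k
  refine (measure_setOf_mem_apply_eq_tsum (hLmeas _) (A := fun n => {ω | X n ω < x})
    fun n => measurableSet_lt (hmeas n) measurable_const).trans
    ((tsum_congr fun n => ?_).trans
      (lintegral_comp_eq_tsum (hLmeas _) fun n => ENNReal.ofReal (F x ^ n)).symm)
  rw [measure_congr ((hevent n).inter (ae_eq_refl {ω | X n ω < x})), measure_congr (hevent n),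
    measure_recordTimeSet_inter_lt hmeas hY, ← hlaw 0, hlawIio, ENNReal.ofReal_pow (hF0 x),
    mul_comm]
end

section
/- With f, F, g_m as above and r ≥ 1 a fixed integer, there is a constant D such that |Σ_{l₁=0}^{l−1} F(l₁/m)^{r−1} g_m(l₁) − F(l/m)^r / r| ≤ D/m uniformly in 0 ≤ l ≤ Mm for all m large. -/
/-!
The weighted sum equals `R_m / (S_m / m)`, where `R_m = ∑_{k<l} h(k/m)/m` is a left Riemann
sum of `h = F^(r-1) f` and `S_m / m` is a Riemann sum of `∫_0^M f = 1`. Both `h` and `f` have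
derivatives bounded in terms of `C` and `M`, hence are Lipschitz on `[0, M]`, so each Riemann sum
is within `O(1/m)` of its integral; and `∫_0^y h = F(y)^r / r`. Once `m` is so large that
`S_m / m ≥ 1/2`, dividing by `S_m / m = 1 + O(1/m)` costs only another `O(1/m)`.
-/

open MeasureTheory Finset
open scoped NNReal

theorem abs_mul_sub_integral_le_of_lipschitzOnWith {h : ℝ → ℝ} {K : ℝ≥0} {a b : ℝ}
    (hab : a ≤ b) (hh : LipschitzOnWith K h (Set.Icc a b)) :
    |h a * (b - a) - ∫ x in a..b, h x| ≤ K * (b - a) ^ 2 := by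
  have hclose : ∀ x ∈ Set.uIoc a b, ‖h a - h x‖ ≤ K * (b - a) := by
    intro x hx
    rw [Set.uIoc_of_le hab] at hx
    calc ‖h a - h x‖ ≤ K * ‖a - x‖ :=
          hh.norm_sub_le (Set.left_mem_Icc.mpr hab) (Set.Ioc_subset_Icc_self hx)
      _ ≤ K * (b - a) := by
          gcongr
          rw [Real.norm_eq_abs, abs_sub_comm, abs_of_nonneg (by linarith [hx.1])]
          linarith [hx.2]
  have hint : IntervalIntegrable h volume a b :=
    (hh.continuousOn.mono (Set.uIcc_of_le hab).subset).intervalIntegrable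
  calc |h a * (b - a) - ∫ x in a..b, h x|
      = ‖∫ x in a..b, (h a - h x)‖ := by
        rw [intervalIntegral.integral_sub intervalIntegrable_const hint,
          intervalIntegral.integral_const, smul_eq_mul, mul_comm, Real.norm_eq_abs]
    _ ≤ K * (b - a) * |b - a| := intervalIntegral.norm_integral_le_of_norm_le_const hclose
    _ = K * (b - a) ^ 2 := by rw [abs_of_nonneg (sub_nonneg.mpr hab)]; ring

theorem abs_sum_div_sub_integral_le_of_lipschitzOnWith {h : ℝ → ℝ} {K : ℝ≥0} {m : ℝ}
    (hm : 0 < m) (n : ℕ) (hh : LipschitzOnWith K h (Set.Icc 0 (n / m))) :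
    |∑ k ∈ range n, h (k / m) / m - ∫ x in 0..n / m, h x| ≤ K * (n / m) / m := by
  set a : ℕ → ℝ := fun k ↦ k / m
  have hmono : Monotone a := fun i j hij ↦
    div_le_div_of_nonneg_right (Nat.cast_le.mpr hij) hm.le
  have hstep : ∀ k, a (k + 1) - a k = 1 / m := fun k ↦ by
    simp only [a]; push_cast; ring
  have hcell : ∀ k ∈ range n, Set.Icc (a k) (a (k + 1)) ⊆ Set.Icc 0 (n / m) := fun k hk ↦
    Set.Icc_subset_Icc (by positivity) (hmono (Finset.mem_range.mp hk))
  have hint : ∀ k < n, IntervalIntegrable h volume (a k) (a (k + 1)) :=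
    fun k hk ↦ ((hh.mono (hcell k (Finset.mem_range.mpr hk))).continuousOn.mono
      (Set.uIcc_of_le (hmono k.le_succ)).subset).intervalIntegrable
  have hsplit : ∑ k ∈ range n, ∫ x in a k..a (k + 1), h x = ∫ x in 0..n / m, h x := by
    simpa [a] using intervalIntegral.sum_integral_adjacent_intervals hint
  calc |∑ k ∈ range n, h (k / m) / m - ∫ x in 0..n / m, h x|
      = |∑ k ∈ range n, (h (a k) * (a (k + 1) - a k) - ∫ x in a k..a (k + 1), h x)| := by
        simp only [hstep, Finset.sum_sub_distrib, hsplit, mul_one_div, a]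
    _ ≤ ∑ k ∈ range n, K * (a (k + 1) - a k) ^ 2 :=
        (Finset.abs_sum_le_sum_abs _ _).trans <| Finset.sum_le_sum fun k hk ↦
          abs_mul_sub_integral_le_of_lipschitzOnWith (hmono k.le_succ) (hh.mono (hcell k hk))
    _ = K * (n / m) / m := by
        simp only [hstep, Finset.sum_const, Finset.card_range, nsmul_eq_mul]
        field_simp

theorem abs_sum_floor_div_sub_integral_le_of_lipschitzOnWith {f : ℝ → ℝ} {K : ℝ≥0}
    {M C m : ℝ} (hM : 0 ≤ M) (hm : 0 < m) (hf : LipschitzOnWith K f (Set.Icc 0 M))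
    (hfC : ∀ x ∈ Set.Icc 0 M, |f x| ≤ C) :
    |(∑ k ∈ range (⌊M * m⌋₊ + 1), f (k / m)) / m - ∫ x in 0..M, f x|
      ≤ (K * M + 2 * C) / m := by
  set N := ⌊M * m⌋₊
  have hNM : (N : ℝ) / m ≤ M := by
    rw [div_le_iff₀ hm]; exact Nat.floor_le (by positivity)
  have hMN : M - N / m ≤ 1 / m := by
    rw [sub_le_iff_le_add, ← add_div, le_div_iff₀ hm]
    linarith [Nat.lt_floor_add_one (M * m)]
  have hN0 : (0 : ℝ) ≤ N / m := by positivity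
  have hint : ∀ u ∈ Set.Icc 0 M, IntervalIntegrable f volume 0 u := fun u hu ↦
    (hf.continuousOn.mono (by rw [Set.uIcc_of_le hu.1]; exact Set.Icc_subset_Icc le_rfl hu.2)
      ).intervalIntegrable
  have hriemann : |∑ k ∈ range N, f (k / m) / m - ∫ x in 0..N / m, f x| ≤ K * M / m :=
    (abs_sum_div_sub_integral_le_of_lipschitzOnWith hm N
      (hf.mono (Set.Icc_subset_Icc le_rfl hNM))).trans (by gcongr)
  have hlast : |f (N / m) / m| ≤ C / m := by
    rw [abs_div, abs_of_pos hm]; gcongr; exact hfC _ ⟨hN0, hNM⟩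
  have htail : |∫ x in N / m..M, f x| ≤ C / m := by
    have hbound : ∀ x ∈ Set.uIoc ((N : ℝ) / m) M, ‖f x‖ ≤ C := fun x hx ↦ by
      rw [Set.uIoc_of_le hNM] at hx
      exact hfC x ⟨hN0.trans hx.1.le, hx.2⟩
    calc |∫ x in N / m..M, f x| ≤ C * |M - N / m| :=
          intervalIntegral.norm_integral_le_of_norm_le_const hbound
      _ ≤ C * (1 / m) := by
          rw [abs_of_nonneg (sub_nonneg.mpr hNM)]
          gcongr
          exact (abs_nonneg _).trans (hfC 0 ⟨le_rfl, hM⟩)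
      _ = C / m := by ring
  rw [Finset.sum_div, Finset.sum_range_succ, ← intervalIntegral.integral_add_adjacent_intervals
    (hint _ ⟨hN0, hNM⟩) ((hint M ⟨hM, le_rfl⟩).symm.trans (hint _ ⟨hN0, hNM⟩)).symm]
  calc |∑ k ∈ range N, f (k / m) / m + f (N / m) / m
        - ((∫ x in 0..N / m, f x) + ∫ x in N / m..M, f x)|
      ≤ |∑ k ∈ range N, f (k / m) / m - ∫ x in 0..N / m, f x| + |f (N / m) / m|
        + |∫ x in N / m..M, f x| := by
        rw [show ∀ a b c d : ℝ, a + b - (c + d) = (a - c) + b - d by intros; ring]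
        exact (abs_sub _ _).trans (by gcongr; exact abs_add_le _ _)
    _ ≤ K * M / m + C / m + C / m := by gcongr
    _ = (K * M + 2 * C) / m := by ring

theorem hasDerivWithinAt_integral_Icc {f : ℝ → ℝ} {a b x : ℝ}
    (hf : ContinuousOn f (Set.Icc a b)) (hx : x ∈ Set.Icc a b) :
    HasDerivWithinAt (fun y ↦ ∫ t in a..y, f t) (f x) (Set.Icc a b) x := by
  have : Fact (x ∈ Set.Icc a b) := ⟨hx⟩
  exact intervalIntegral.integral_hasDerivWithinAt_right
    ((hf.mono (by rw [Set.uIcc_of_le hx.1]; exact Set.Icc_subset_Icc le_rfl hx.2)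
      ).intervalIntegrable)
    (hf.stronglyMeasurableAtFilter_nhdsWithin measurableSet_Icc x) (hf.continuousWithinAt hx)

theorem integral_pow_mul_eq_of_hasDerivWithinAt {F f : ℝ → ℝ} {a b : ℝ} (hab : a ≤ b)
    (hF : ∀ x ∈ Set.Icc a b, HasDerivWithinAt F (f x) (Set.Icc a b) x)
    (hf : ContinuousOn f (Set.Icc a b)) (n : ℕ) :
    ∫ x in a..b, F x ^ n * f x = (F b ^ (n + 1) - F a ^ (n + 1)) / (n + 1) := by
  have hFc : ContinuousOn F (Set.Icc a b) := fun x hx ↦ (hF x hx).continuousWithinAt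
  rw [sub_div]
  refine intervalIntegral.integral_eq_sub_of_hasDeriv_right_of_le hab
    ((hFc.pow _).div_const _) (fun x hx ↦ ?_)
    ((hFc.pow n).mul hf |>.mono (Set.uIcc_of_le hab).subset).intervalIntegrable
  have hd := (((hF x (Set.Ioo_subset_Icc_self hx)).hasDerivAt
    (Icc_mem_nhds hx.1 hx.2)).pow (n + 1)).div_const ((n : ℝ) + 1)
  convert hd.hasDerivWithinAt using 1
  push_cast
  field_simp

theorem integral_pow_mul_integral_eq {f : ℝ → ℝ} {M y : ℝ}
    (hf : ContinuousOn f (Set.Icc 0 M)) (hy : y ∈ Set.Icc 0 M) (n : ℕ) :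
    ∫ x in 0..y, (∫ t in 0..x, f t) ^ n * f x = (∫ t in 0..y, f t) ^ (n + 1) / (n + 1) := by
  have hsub : Set.Icc 0 y ⊆ Set.Icc 0 M := Set.Icc_subset_Icc le_rfl hy.2
  rw [integral_pow_mul_eq_of_hasDerivWithinAt hy.1
    (fun x hx ↦ hasDerivWithinAt_integral_Icc (hf.mono hsub) hx) (hf.mono hsub)]
  simp

theorem abs_integral_le_mul_of_abs_le {f : ℝ → ℝ} {C M x : ℝ}
    (hf : ∀ z ∈ Set.Icc 0 M, |f z| ≤ C) (hx : x ∈ Set.Icc 0 M) :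
    |∫ z in 0..x, f z| ≤ C * M := by
  have hbound : ∀ z ∈ Set.uIoc 0 x, ‖f z‖ ≤ C := fun z hz ↦ by
    rw [Set.uIoc_of_le hx.1] at hz
    exact hf z ⟨hz.1.le, hz.2.trans hx.2⟩
  calc |∫ z in 0..x, f z| ≤ C * |x - 0| :=
        intervalIntegral.norm_integral_le_of_norm_le_const hbound
    _ ≤ C * M := by
        rw [sub_zero, abs_of_nonneg hx.1]
        exact mul_le_mul_of_nonneg_left hx.2 ((abs_nonneg _).trans (hf x hx))

theorem lipschitzOnWith_of_abs_hasDerivWithinAt_le {f f' : ℝ → ℝ} {s : Set ℝ} {K : ℝ}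
    (hs : Convex ℝ s) (hf : ∀ x ∈ s, HasDerivWithinAt f (f' x) s x)
    (hK : ∀ x ∈ s, |f' x| ≤ K) : LipschitzOnWith K.toNNReal f s :=
  hs.lipschitzOnWith_of_nnnorm_hasDerivWithin_le hf fun x hx ↦
    (Real.le_toNNReal_iff_coe_le ((abs_nonneg _).trans (hK x hx))).mpr (hK x hx)

theorem lipschitzOnWith_pow_mul {F f f' : ℝ → ℝ} {s : Set ℝ} {B C : ℝ} (hs : Convex ℝ s)
    (hF : ∀ x ∈ s, HasDerivWithinAt F (f x) s x)
    (hf : ∀ x ∈ s, HasDerivWithinAt f (f' x) s x) (hFB : ∀ x ∈ s, |F x| ≤ B)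
    (hfC : ∀ x ∈ s, |f x| ≤ C) (hf'C : ∀ x ∈ s, |f' x| ≤ C) (n : ℕ) :
    LipschitzOnWith (n * B ^ (n - 1) * C * C + B ^ n * C).toNNReal
      (fun x ↦ F x ^ n * f x) s := by
  refine lipschitzOnWith_of_abs_hasDerivWithinAt_le hs
    (fun x hx ↦ ((hF x hx).pow n).mul (hf x hx)) fun x hx ↦ ?_
  have hB : 0 ≤ B := (abs_nonneg _).trans (hFB x hx)
  have hC : 0 ≤ C := (abs_nonneg _).trans (hfC x hx)
  calc |(n : ℝ) * F x ^ (n - 1) * f x * f x + F x ^ n * f' x|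
      ≤ n * |F x| ^ (n - 1) * |f x| * |f x| + |F x| ^ n * |f' x| := by
        simpa only [abs_mul, abs_pow, Nat.abs_cast] using
          abs_add_le ((n : ℝ) * F x ^ (n - 1) * f x * f x) (F x ^ n * f' x)
    _ ≤ n * B ^ (n - 1) * C * C + B ^ n * C := by
        gcongr <;> first | exact hFB x hx | exact hfC x hx | exact hf'C x hx

theorem abs_pow_succ_div_le {a B : ℝ} (ha : |a| ≤ B) (n : ℕ) :
    |a ^ (n + 1) / ((n : ℝ) + 1)| ≤ B ^ (n + 1) := by
  rw [abs_div, abs_pow, abs_of_pos (Nat.cast_add_one_pos n : (0 : ℝ) < n + 1)]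
  exact (div_le_self (by positivity) (le_add_of_nonneg_left n.cast_nonneg)).trans
    (pow_le_pow_left₀ (abs_nonneg _) ha _)

theorem abs_div_sub_le_of_abs_sub_one_le {R I s ε : ℝ} (hs : |s - 1| ≤ ε)
    (hε : 2 * ε ≤ 1) : |R / s - I| ≤ 2 * ε * |R| + |R - I| := by
  have hs2 : 1 / 2 ≤ s := by linarith [(abs_le.mp hs).1]
  have hs0 : 0 < s := by linarith
  have hquot : |R * (1 - s) / s| ≤ 2 * ε * |R| := by
    rw [abs_div, abs_mul, abs_of_pos hs0, div_le_iff₀ hs0, abs_sub_comm]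
    have hε0 : 0 ≤ ε := (abs_nonneg _).trans hs
    nlinarith [mul_le_mul_of_nonneg_left hs (abs_nonneg R),
      mul_nonneg (mul_nonneg hε0 (abs_nonneg R)) (by linarith : 0 ≤ 2 * s - 1)]
  calc |R / s - I| = |R * (1 - s) / s + (R - I)| := by congr 1; field_simp; ring
    _ ≤ 2 * ε * |R| + |R - I| := (abs_add_le _ _).trans (by gcongr)

theorem abs_sum_div_div_sub_le {h G : ℝ → ℝ} {K : ℝ≥0} {M m s c A : ℝ} {l : ℕ}
    (hh : LipschitzOnWith K h (Set.Icc 0 M)) (hG : ∀ y ∈ Set.Icc 0 M, ∫ x in 0..y, h x = G y)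
    (hGA : ∀ y ∈ Set.Icc 0 M, |G y| ≤ A) (hm : 1 ≤ m) (hl : l ≤ M * m)
    (hs : |s - 1| ≤ c / m) (hc : 2 * c ≤ m) :
    |(∑ k ∈ range l, h (k / m) / m) / s - G (l / m)| ≤ (2 * c * (A + K * M) + K * M) / m := by
  set R := ∑ k ∈ range l, h (k / m) / m
  have hm0 : 0 < m := by linarith
  have hM : 0 ≤ M := nonneg_of_mul_nonneg_left ((Nat.cast_nonneg l).trans hl) hm0
  have hlM : (l : ℝ) / m ∈ Set.Icc 0 M := ⟨by positivity, by rwa [div_le_iff₀ hm0]⟩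
  have hriemann : |R - G (l / m)| ≤ K * M / m := by
    rw [← hG _ hlM]
    exact (abs_sum_div_sub_integral_le_of_lipschitzOnWith hm0 l
      (hh.mono (Set.Icc_subset_Icc le_rfl hlM.2))).trans (by gcongr; exact hlM.2)
  have hR : |R| ≤ A + K * M := by
    have := abs_sub_abs_le_abs_sub R (G (l / m))
    have := div_le_self (by positivity : (0 : ℝ) ≤ K * M) hm
    linarith [hGA _ hlM]
  have hcm : 0 ≤ c / m := (abs_nonneg _).trans hs
  calc |R / s - G (l / m)| ≤ 2 * (c / m) * |R| + |R - G (l / m)| :=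
        abs_div_sub_le_of_abs_sub_one_le hs
          (by rw [mul_div_assoc']; exact (div_le_one hm0).mpr hc)
    _ ≤ 2 * (c / m) * (A + K * M) + K * M / m := by gcongr
    _ = (2 * c * (A + K * M) + K * M) / m := by ring

theorem weighted_sum_approximation_general
    (M C : ℝ) (hM : 0 < M) (f f' : ℝ → ℝ)
    (hderiv : ∀ z ∈ Set.Icc (0 : ℝ) M, HasDerivWithinAt f (f' z) (Set.Icc (0 : ℝ) M) z)
    (hfC : ∀ z ∈ Set.Icc (0 : ℝ) M, |f z| ≤ C)
    (hf'C : ∀ z ∈ Set.Icc (0 : ℝ) M, |f' z| ≤ C)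
    (hdens : ∫ z in (0 : ℝ)..M, f z = 1)
    (F : ℝ → ℝ) (hF : ∀ y, F y = ∫ z in (0 : ℝ)..y, f z)
    (g : ℕ → ℕ → ℝ)
    (hg : ∀ m l, g m l = f (l / m) / ∑ l' ∈ Finset.range (⌊M * m⌋₊ + 1), f (l' / m))
    (r : ℕ) (hr : 1 ≤ r) :
    ∃ D : ℝ, ∃ m₀ : ℕ, 1 ≤ m₀ ∧ ∀ m : ℕ, m₀ ≤ m → ∀ l : ℕ, (l : ℝ) ≤ M * m →
      |(∑ l₁ ∈ Finset.range l, F (l₁ / m) ^ (r - 1) * g m l₁) - F (l / m) ^ r / r| ≤ D / m := by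
  obtain ⟨n, rfl⟩ : ∃ n, r = n + 1 := ⟨r - 1, by omega⟩
  obtain rfl : F = fun y ↦ ∫ z in 0..y, f z := funext hF
  have hC : 0 ≤ C := (abs_nonneg _).trans (hfC 0 ⟨le_rfl, hM.le⟩)
  have hfc : ContinuousOn f (Set.Icc 0 M) := fun z hz ↦ (hderiv z hz).continuousWithinAt
  have hFB (x) (hx : x ∈ Set.Icc 0 M) := abs_integral_le_mul_of_abs_le hfC hx
  set K := (n * (C * M) ^ (n - 1) * C * C + (C * M) ^ n * C).toNNReal
  have hh : LipschitzOnWith K (fun x ↦ (∫ z in 0..x, f z) ^ n * f x) (Set.Icc 0 M) :=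
    lipschitzOnWith_pow_mul (convex_Icc 0 M) (fun x hx ↦ hasDerivWithinAt_integral_Icc hfc hx)
      hderiv hFB hfC hf'C n
  set c := C * M + 2 * C
  refine ⟨2 * c * ((C * M) ^ (n + 1) + K * M) + K * M, ⌈2 * c⌉₊ + 1, by omega,
    fun m hm l hl ↦ ?_⟩
  have hm1 : (1 : ℝ) ≤ m := by exact_mod_cast le_of_add_le_right hm
  have hc : 2 * c ≤ m := (Nat.le_ceil _).trans (by exact_mod_cast (Nat.le_succ _).trans hm)
  have hnorm : |(∑ l' ∈ range (⌊M * m⌋₊ + 1), f (l' / m)) / m - 1| ≤ c / m := by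
    simpa only [hdens, Real.coe_toNNReal _ hC] using
      abs_sum_floor_div_sub_integral_le_of_lipschitzOnWith hM.le (by positivity)
        (lipschitzOnWith_of_abs_hasDerivWithinAt_le (convex_Icc 0 M) hderiv hf'C) hfC
  have hsum : ∑ l₁ ∈ range l, (∫ z in 0..l₁ / m, f z) ^ n * g m l₁ =
      (∑ k ∈ range l, (∫ z in 0..k / m, f z) ^ n * f (k / m) / m) /
        ((∑ l' ∈ range (⌊M * m⌋₊ + 1), f (l' / m)) / m) := by
    rw [← Finset.sum_div, div_div_div_cancel_right₀ (by positivity), Finset.sum_div]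
    simp only [hg, mul_div_assoc]
  rw [Nat.add_sub_cancel, hsum, Nat.cast_succ]
  exact (abs_sum_div_div_sub_le hh (fun y hy ↦ integral_pow_mul_integral_eq hfc hy n)
    (fun y hy ↦ abs_pow_succ_div_le (hFB y hy) n) hm1 hl hnorm hc :)

/-- Lemma 1, relation (3.5): with `g_m(l) = f(l/m) / ∑_{l' ≤ M m} f(l'/m)` the
normalized discretization of a `C¹` density `f` on `[0, M]` (with `f, f'` bounded
by `C`) and `F(y) = ∫_0^y f`, for each fixed integer `r ≥ 1` one has
`|∑_{l₁ < l} F(l₁/m)^{r-1} g_m(l₁) - F(l/m)^r / r| ≤ D / m`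
uniformly in `0 ≤ l ≤ M m` for all `m` large. -/
theorem weighted_sum_approximation
    (M C : ℝ) (hM : 0 < M) (f f' : ℝ → ℝ)
    (hderiv : ∀ z ∈ Set.Icc (0 : ℝ) M, HasDerivWithinAt f (f' z) (Set.Icc (0 : ℝ) M) z)
    (hf'cont : ContinuousOn f' (Set.Icc (0 : ℝ) M))
    (hfpos : ∀ z ∈ Set.Icc (0 : ℝ) M, 0 ≤ f z)
    (hfC : ∀ z ∈ Set.Icc (0 : ℝ) M, |f z| ≤ C)
    (hf'C : ∀ z ∈ Set.Icc (0 : ℝ) M, |f' z| ≤ C)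
    (hdens : ∫ z in (0 : ℝ)..M, f z = 1)
    (F : ℝ → ℝ) (hF : ∀ y, F y = ∫ z in (0 : ℝ)..y, f z)
    (g : ℕ → ℕ → ℝ)
    (hg : ∀ m l, g m l = f (l / m) / ∑ l' ∈ Finset.range (⌊M * m⌋₊ + 1), f (l' / m))
    (r : ℕ) (hr : 1 ≤ r) :
    ∃ D : ℝ, ∃ m₀ : ℕ, 1 ≤ m₀ ∧ ∀ m : ℕ, m₀ ≤ m → ∀ l : ℕ, (l : ℝ) ≤ M * m →
      |(∑ l₁ ∈ Finset.range l, F (l₁ / m) ^ (r - 1) * g m l₁) - F (l / m) ^ r / r| ≤ D / m :=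
  weighted_sum_approximation_general M C hM f f' hderiv hfC hf'C hdens F hF g hg r hr
end
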